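/- arXiv:1907.06459 — 2 statements merged into one kernel-verified Lean document; each statement's English description precedes it below -/
import Mathlib

section
/- For the random-field Ising model on a finite graph G at inverse temperature β ∈ (0,∞) and any field realization η, and for any two vertices u, v ∈ V(G), the truncated correlation admits the disagreement-percolation representation ⟨σ_u; σ_v⟩ = 2 · ⟨⟨ 1[u ↔_D v] ⟩⟩, where ⟨⟨·⟩⟩ is the expectation with respect to the product of two independent identically distributed copies of the extended measure P̄_Ḡ. -/
open MeasureTheory ProbabilityTheory Real BigOperators
open scoped Classical

noncomputable section
namespace RFIM

/-- The two-point spin space `{-1,+1} ⊂ ℤ`. -/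
abbrev Spin : Type := ({-1, 1} : Finset ℤ)
/-- The mid-edge value space `{-1,0,+1} ⊂ ℤ`. -/
abbrev Mid : Type := ({-1, 0, 1} : Finset ℤ)

/-- The real value of a spin. -/
def spinR (s : Spin) : ℝ := ((s : ℤ) : ℝ)

/-- The `+1` spin. -/
def pl : Spin := ⟨1, by decide⟩
/-- The `-1` spin. -/
def mn : Spin := ⟨-1, by decide⟩

section GeneralGraph

variable {V : Type} [Fintype V] [DecidableEq V]

/-- Energy `J σ_u σ_v` carried by an (unordered) edge. -/
def edgeE (J : ℝ) (σ : V → Spin) : Sym2 V → ℝ :=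
  Sym2.lift ⟨fun u v => J * spinR (σ u) * spinR (σ v), fun _ _ => by ring⟩

/-- The RFIM Hamiltonian `H(σ) = -∑_{e} J σ_u σ_v - ∑_v (h + ε η_v) σ_v` on a finite graph. -/
def hamG (G : SimpleGraph V) [DecidableRel G.Adj] (J h ε : ℝ) (η : V → ℝ) (σ : V → Spin) : ℝ :=
  - ∑ e ∈ G.edgeFinset, edgeE J σ e - ∑ v, (h + ε * η v) * spinR (σ v)

/-- Partition function restricted to configurations agreeing with `τ` on `A`. -/
def ZG (G : SimpleGraph V) [DecidableRel G.Adj] (J h ε β : ℝ) (η : V → ℝ)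
    (A : Finset V) (τ : V → Spin) : ℝ :=
  ∑ σ : V → Spin,
    if ∀ v ∈ A, σ v = τ v then Real.exp (-(β * hamG G J h ε η σ)) else 0

/-- Thermal expectation of `f` under the Gibbs measure conditioned on `{σ = τ on A}`. -/
def thermalG (G : SimpleGraph V) [DecidableRel G.Adj] (J h ε β : ℝ) (η : V → ℝ)
    (A : Finset V) (τ : V → Spin) (f : (V → Spin) → ℝ) : ℝ :=
  (∑ σ : V → Spin,
    if ∀ v ∈ A, σ v = τ v then f σ * Real.exp (-(β * hamG G J h ε η σ)) else 0) /
    ZG G J h ε β η A τ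

/-- Partition function with spins constrained to the constant value `s₁` on `A₁`
and `s₂` on `A₂`. -/
def Z2G (G : SimpleGraph V) [DecidableRel G.Adj] (J h ε β : ℝ) (η : V → ℝ)
    (A₁ A₂ : Finset V) (s₁ s₂ : Spin) : ℝ :=
  ∑ σ : V → Spin,
    if (∀ v ∈ A₁, σ v = s₁) ∧ (∀ v ∈ A₂, σ v = s₂) then
      Real.exp (-(β * hamG G J h ε η σ)) else 0

/-- Internal vertex boundary of `Λ` in the graph `G`. -/
def vbdryG (G : SimpleGraph V) [DecidableRel G.Adj] (Λ : Finset V) : Finset V :=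
  Λ.filter fun v => ¬ G.neighborFinset v ⊆ Λ

/-- The surface tension `β⁻¹ log (Z^{++} Z^{--} / (Z^{+-} Z^{-+}))` between the internal
vertex boundaries of `Λ₁` and `Λ₂`. -/
def surfTG (G : SimpleGraph V) [DecidableRel G.Adj] (J h ε β : ℝ) (η : V → ℝ)
    (Λ₁ Λ₂ : Finset V) : ℝ :=
  β⁻¹ * Real.log
    ((Z2G G J h ε β η (vbdryG G Λ₁) (vbdryG G Λ₂) pl pl *
      Z2G G J h ε β η (vbdryG G Λ₁) (vbdryG G Λ₂) mn mn) /
     (Z2G G J h ε β η (vbdryG G Λ₁) (vbdryG G Λ₂) pl mn *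
      Z2G G J h ε β η (vbdryG G Λ₁) (vbdryG G Λ₂) mn pl))

end GeneralGraph
section ExtendedModel

variable {V : Type} [Fintype V] [DecidableEq V]

/-- `t = (e^{2Jβ} - 1)^{-1/2}`. -/
def tpar (J β : ℝ) : ℝ := (Real.sqrt (Real.exp (2 * J * β) - 1))⁻¹
/-- `λ = (2 sinh (Jβ))^{1/2}`. -/
def lampar (J β : ℝ) : ℝ := Real.sqrt (2 * Real.sinh (J * β))

/-- The weight `W(a,b) = λ (δ_{a,b} + t δ_{b,0})`. -/
def Wgt (J β : ℝ) (a b : ℤ) : ℝ :=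
  lampar J β * ((if a = b then 1 else 0) + tpar J β * (if b = 0 then 1 else 0))

/-- The product `W(σ_u, k) W(σ_v, k)` over the two endpoints of an edge. -/
def edgeW (J β : ℝ) (σ : V → Spin) (k : ℤ) : Sym2 V → ℝ :=
  Sym2.lift ⟨fun u v => Wgt J β (σ u : ℤ) k * Wgt J β (σ v : ℤ) k, fun _ _ => mul_comm _ _⟩

/-- The weight of an extended configuration `(σ, κ)`:
`∏_{e ∈ E(G)} ∏_{v ∈ e} W(σ_v, κ_e) · e^{-β ∑_v (h + ε η_v) σ_v}`. -/
def extWeight (G : SimpleGraph V) [DecidableRel G.Adj] (J h ε β : ℝ) (η : V → ℝ)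
    (σ : V → Spin) (κ : G.edgeFinset → Mid) : ℝ :=
  (∏ e : G.edgeFinset, edgeW J β σ (κ e : ℤ) (e : Sym2 V)) *
    Real.exp (-(β * ∑ v, (h + ε * η v) * spinR (σ v)))

/-- Extended partition function restricted to vertex configurations agreeing with `τ` on `A`. -/
def extZ (G : SimpleGraph V) [DecidableRel G.Adj] (J h ε β : ℝ) (η : V → ℝ)
    (A : Finset V) (τ : V → Spin) : ℝ :=
  ∑ σ : V → Spin, ∑ κ : G.edgeFinset → Mid,
    if ∀ v ∈ A, σ v = τ v then extWeight G J h ε β η σ κ else 0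

/-- Extended partition function with vertex spins constrained to the constant `s₁` on `A₁`
and `s₂` on `A₂`. -/
def extZ2 (G : SimpleGraph V) [DecidableRel G.Adj] (J h ε β : ℝ) (η : V → ℝ)
    (A₁ A₂ : Finset V) (s₁ s₂ : Spin) : ℝ :=
  ∑ σ : V → Spin, ∑ κ : G.edgeFinset → Mid,
    if (∀ v ∈ A₁, σ v = s₁) ∧ (∀ v ∈ A₂, σ v = s₂) then extWeight G J h ε β η σ κ else 0

/-- Probability of the extended configuration `(σ,κ)` under the extended measure
conditioned on `{σ = τ on A}`. -/
def extProb (G : SimpleGraph V) [DecidableRel G.Adj] (J h ε β : ℝ) (η : V → ℝ)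
    (A : Finset V) (τ : V → Spin) (σ : V → Spin) (κ : G.edgeFinset → Mid) : ℝ :=
  (if ∀ v ∈ A, σ v = τ v then extWeight G J h ε β η σ κ else 0) / extZ G J h ε β η A τ

/-- Expectation of `F` under the product of the extended measures conditioned on
`{σ = τ on A}` and `{σ' = τ' on A}` respectively. -/
def extExp2 (G : SimpleGraph V) [DecidableRel G.Adj] (J h ε β : ℝ) (η : V → ℝ)
    (A : Finset V) (τ τ' : V → Spin)
    (F : (V → Spin) → (G.edgeFinset → Mid) → (V → Spin) → (G.edgeFinset → Mid) → ℝ) : ℝ :=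
  (∑ σ : V → Spin, ∑ κ : G.edgeFinset → Mid, ∑ σ' : V → Spin, ∑ κ' : G.edgeFinset → Mid,
      if (∀ v ∈ A, σ v = τ v) ∧ (∀ v ∈ A, σ' v = τ' v) then
        F σ κ σ' κ' * extWeight G J h ε β η σ κ * extWeight G J h ε β η σ' κ' else 0) /
    (extZ G J h ε β η A τ * extZ G J h ε β η A τ')

/-- The extended graph: vertices of `G` together with one midpoint per edge, each midpoint
joined to the two endpoints of its edge. -/
def extGraph (G : SimpleGraph V) [DecidableRel G.Adj] :
    SimpleGraph (V ⊕ G.edgeFinset) where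
  Adj x y :=
    match x, y with
    | Sum.inl v, Sum.inr e => v ∈ (e : Sym2 V)
    | Sum.inr e, Sum.inl v => v ∈ (e : Sym2 V)
    | _, _ => False
  symm := ⟨by
    rintro (v | e) (w | f) h
    · exact h.elim
    · exact h
    · exact h
    · exact h.elim⟩
  loopless := ⟨by rintro (v | e) h <;> exact h.elim⟩

/-- The values of an extended configuration on the extended vertex set. -/
def extConf {G : SimpleGraph V} [DecidableRel G.Adj]
    (σ : V → Spin) (κ : G.edgeFinset → Mid) : V ⊕ G.edgeFinset → ℤ :=
  fun z => match z with
  | Sum.inl v => (σ v : ℤ)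
  | Sum.inr e => (κ e : ℤ)

/-- The disagreement set of a pair of extended configurations. -/
def DisSet {G : SimpleGraph V} [DecidableRel G.Adj]
    (σ : V → Spin) (κ : G.edgeFinset → Mid) (σ' : V → Spin) (κ' : G.edgeFinset → Mid) :
    Set (V ⊕ G.edgeFinset) :=
  {z | extConf σ κ z ≠ extConf σ' κ' z}

/-- `x` and `y` are connected by a path of `H` all of whose vertices lie in `D`. -/
def ConnectedIn {α : Type} (H : SimpleGraph α) (D : Set α) (x y : α) : Prop :=
  ∃ p : H.Walk x y, ∀ z ∈ p.support, z ∈ D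

end ExtendedModel
section Lattice

/-- The graph (ℓ¹) distance on `ℤ^d`. -/
def dist1 {d : ℕ} (u v : Fin d → ℤ) : ℤ := ∑ i, |u i - v i|

lemma dist1_comm {d : ℕ} (u v : Fin d → ℤ) : dist1 u v = dist1 v u :=
  Finset.sum_congr rfl fun _ _ => abs_sub_comm _ _

/-- The ball `Λ(L) = {v ∈ ℤ^d : d(0,v) ≤ L}` (for the graph distance) as a finite set. -/
def box (d L : ℕ) : Finset (Fin d → ℤ) :=
  (Finset.Icc (fun _ => -(L : ℤ)) (fun _ => (L : ℤ))).filter fun v => dist1 v 0 ≤ (L : ℤ)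

/-- The nearest-neighbor graph on a finite subset `Λ` of `ℤ^d`. -/
def latG (d : ℕ) (Λ : Finset (Fin d → ℤ)) : SimpleGraph Λ where
  Adj u v := dist1 (u : Fin d → ℤ) (v : Fin d → ℤ) = 1
  symm := ⟨fun u v h => by show dist1 (v : Fin d → ℤ) (u : Fin d → ℤ) = 1; rw [dist1_comm]; exact h⟩
  loopless := ⟨fun u h => by simp [dist1] at h⟩

instance {d : ℕ} {Λ : Finset (Fin d → ℤ)} : DecidableRel (latG d Λ).Adj :=
  fun u v => decidable_of_iff (dist1 (u : Fin d → ℤ) (v : Fin d → ℤ) = 1) Iff.rfl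

/-- The nearest neighbors of a point of `ℤ^d`. -/
def nbrs {d : ℕ} (v : Fin d → ℤ) : Finset (Fin d → ℤ) :=
  (Finset.univ.image fun i : Fin d => Function.update v i (v i + 1)) ∪
    (Finset.univ.image fun i : Fin d => Function.update v i (v i - 1))

/-- The internal vertex boundary `∂_v Λ` of a finite `Λ ⊂ ℤ^d`: points of `Λ` having a
nearest neighbor outside `Λ`. -/
def vbdry {d : ℕ} (Λ : Finset (Fin d → ℤ)) : Finset (Fin d → ℤ) :=
  Λ.filter fun v => ¬ nbrs v ⊆ Λ

/-- Restriction of a field on `ℤ^d` to `Λ`. -/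
def restF {d : ℕ} (Λ : Finset (Fin d → ℤ)) (η : (Fin d → ℤ) → ℝ) : Λ → ℝ := fun v => η ↑v

/-- A subset `A ⊆ ℤ^d` viewed inside `Λ`. -/
def inΛ {d : ℕ} (Λ A : Finset (Fin d → ℤ)) : Finset Λ :=
  Finset.univ.filter fun v => (v : Fin d → ℤ) ∈ A

/-- Thermal expectation of `f` in volume `Λ` with the spins on `A` frozen to the constant
value `τ`, at field realization `η`. -/
def thermalL (d : ℕ) (Λ : Finset (Fin d → ℤ)) (J h ε β : ℝ) (η : (Fin d → ℤ) → ℝ)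
    (A : Finset (Fin d → ℤ)) (τ : Spin) (f : (Λ → Spin) → ℝ) : ℝ :=
  thermalG (latG d Λ) J h ε β (restF Λ η) (inΛ Λ A) (fun _ => τ) f

/-- The i.i.d. standard Gaussian field on `Λ` (extended by `0` off `Λ`),
as a measure on fields on `ℤ^d`. -/
def fieldMeasure (d : ℕ) (Λ : Finset (Fin d → ℤ)) : Measure ((Fin d → ℤ) → ℝ) :=
  (Measure.pi fun _ : Λ => gaussianReal 0 1).map
    fun η v => if hv : v ∈ Λ then η ⟨v, hv⟩ else 0

/-- The spin at the origin, as an observable in volume `Λ`. -/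
def obs0 {d : ℕ} (Λ : Finset (Fin d → ℤ)) : (Λ → Spin) → ℝ :=
  fun σ => ∑ v : Λ, if (v : Fin d → ℤ) = 0 then spinR (σ v) else 0

/-- The order parameter
`m(L) = (1/2) 𝔼[⟨σ_0⟩_{Λ(L)}^+ - ⟨σ_0⟩_{Λ(L)}^-]` of the RFIM on `ℤ^d`. -/
def mOrd (d : ℕ) (J h ε β : ℝ) (L : ℕ) : ℝ :=
  ∫ η, (1/2) *
      (thermalL d (box d L) J h ε β η (vbdry (box d L)) pl (obs0 (box d L)) -
       thermalL d (box d L) J h ε β η (vbdry (box d L)) mn (obs0 (box d L)))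
    ∂ fieldMeasure d (box d L)

/-- The disagreement count
`D_{Λ₁,Λ₂}(η) = (1/2) ∑_{v ∈ Λ₁} [⟨σ_v⟩_{Λ₂}^+ - ⟨σ_v⟩_{Λ₂}^-]`. -/
def DL (d : ℕ) (Λ₁ Λ₂ : Finset (Fin d → ℤ)) (J h ε β : ℝ) (η : (Fin d → ℤ) → ℝ) : ℝ :=
  (1/2) * ∑ v : Λ₂,
    if (v : Fin d → ℤ) ∈ Λ₁ then
      thermalL d Λ₂ J h ε β η (vbdry Λ₂) pl (fun σ => spinR (σ v)) -
      thermalL d Λ₂ J h ε β η (vbdry Λ₂) mn (fun σ => spinR (σ v))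
    else 0

/-- The lattice partition function in volume `Λ` with spins constrained to `s₁` on `A₁`
and `s₂` on `A₂`. -/
def Z2L (d : ℕ) (Λ : Finset (Fin d → ℤ)) (J h ε β : ℝ) (η : (Fin d → ℤ) → ℝ)
    (A₁ A₂ : Finset (Fin d → ℤ)) (s₁ s₂ : Spin) : ℝ :=
  Z2G (latG d Λ) J h ε β (restF Λ η) (inΛ Λ A₁) (inΛ Λ A₂) s₁ s₂

/-- The lattice surface tension `T_{Λ₁,Λ₂}(η)`. -/
def surfT (d : ℕ) (Λ₁ Λ₂ : Finset (Fin d → ℤ)) (J h ε β : ℝ)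
    (η : (Fin d → ℤ) → ℝ) : ℝ :=
  β⁻¹ * Real.log
    ((Z2L d Λ₂ J h ε β η (vbdry Λ₁) (vbdry Λ₂) pl pl *
      Z2L d Λ₂ J h ε β η (vbdry Λ₁) (vbdry Λ₂) mn mn) /
     (Z2L d Λ₂ J h ε β η (vbdry Λ₁) (vbdry Λ₂) pl mn *
      Z2L d Λ₂ J h ε β η (vbdry Λ₁) (vbdry Λ₂) mn pl))

/-- Adding a uniform field of intensity `t` on `Λ`. -/
def shiftF {d : ℕ} (Λ : Finset (Fin d → ℤ)) (t : ℝ) (η : (Fin d → ℤ) → ℝ) :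
    (Fin d → ℤ) → ℝ :=
  fun v => if v ∈ Λ then η v + t else η v

end Lattice
section LatticeExtended

/-- Expectation under the product of the all-`τ` and all-`τ'` conditioned extended measures
in volume `Λ ⊂ ℤ^d`, with conditioning on `A`. -/
def extExp2L (d : ℕ) (Λ : Finset (Fin d → ℤ)) (J h ε β : ℝ) (η : (Fin d → ℤ) → ℝ)
    (A : Finset (Fin d → ℤ)) (τ τ' : Spin)
    (F : (Λ → Spin) → ((latG d Λ).edgeFinset → Mid) →
         (Λ → Spin) → ((latG d Λ).edgeFinset → Mid) → ℝ) : ℝ :=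
  extExp2 (latG d Λ) J h ε β (restF Λ η) (inΛ Λ A) (fun _ => τ) (fun _ => τ') F

/-- The annulus `𝒜_{1,2}(ℓ) = Λ(2ℓ) ∖ Λ(ℓ)` in `ℤ²`. -/
def ann (ℓ : ℕ) : Finset (Fin 2 → ℤ) := box 2 (2 * ℓ) \ box 2 ℓ

/-- The inner boundary of the annulus: its vertices with a neighbor in `Λ(ℓ)`. -/
def innerB (ℓ : ℕ) : Finset (Fin 2 → ℤ) :=
  (ann ℓ).filter fun v => (nbrs v ∩ box 2 ℓ).Nonempty

/-- The outer boundary of the annulus: its vertices with a neighbor outside `Λ(2ℓ)`. -/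
def outerB (ℓ : ℕ) : Finset (Fin 2 → ℤ) :=
  (ann ℓ).filter fun v => ¬ nbrs v ⊆ box 2 (2 * ℓ)

/-- The event that the (extended) annulus `𝒜_{1,2}(ℓ)` is crossed by a path of the
disagreement set of length (number of steps) at most `n`. -/
def crossPred (ℓ : ℕ) (n : ℝ)
    (σ : (ann ℓ) → Spin) (κ : (latG 2 (ann ℓ)).edgeFinset → Mid)
    (σ' : (ann ℓ) → Spin) (κ' : (latG 2 (ann ℓ)).edgeFinset → Mid) : Prop :=
  ∃ (a b : (ann ℓ : Finset (Fin 2 → ℤ))), (a : Fin 2 → ℤ) ∈ innerB ℓ ∧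
    (b : Fin 2 → ℤ) ∈ outerB ℓ ∧
    ∃ w : (extGraph (latG 2 (ann ℓ))).Walk (Sum.inl a) (Sum.inl b),
      (∀ z ∈ w.support, z ∈ DisSet σ κ σ' κ') ∧ (w.length : ℝ) ≤ n

/-- The annealed probability that the annulus `𝒜_{1,2}(ℓ)` is crossed by a disagreement
path of length at most `n`, under `plus/minus` boundary conditions on `∂_v 𝒜_{1,2}(ℓ)`. -/
def crossProb (J h ε β : ℝ) (ℓ : ℕ) (n : ℝ) : ℝ :=
  ∫ η, extExp2L 2 (ann ℓ) J h ε β η (vbdry (ann ℓ)) pl mn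
      (fun σ κ σ' κ' => if crossPred ℓ n σ κ σ' κ' then 1 else 0)
    ∂ fieldMeasure 2 (ann ℓ)

end LatticeExtended
section Lasso

/-- An extended vertex of `Λ̄` lies in the (extended) annulus `Λ(8ℓ) ∖ Λ(ℓ)`. -/
def extInAnn (ℓ : ℕ) (Λ : Finset (Fin 2 → ℤ)) :
    (Λ ⊕ (latG 2 Λ).edgeFinset) → Prop
  | Sum.inl v => (v : Fin 2 → ℤ) ∈ box 2 (8 * ℓ) \ box 2 ℓ
  | Sum.inr e => ∀ u ∈ (e : Sym2 (Λ : Finset (Fin 2 → ℤ))),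
      (u : Fin 2 → ℤ) ∈ box 2 (8 * ℓ) \ box 2 ℓ

/-- The lasso event `𝓛(ℓ)`: the union of connected components of the disagreement set in
`Λ̄(25ℓ)` meeting `∂_v Λ(25ℓ)` contains a circuit lying in the annulus `Λ(8ℓ) ∖ Λ(ℓ)`
which surrounds the inner hole (i.e. meets every extended path from `Λ(ℓ)` to
`∂_v Λ(25ℓ)`). -/
def lassoPred (ℓ : ℕ)
    (σ : (box 2 (25 * ℓ)) → Spin) (κ : (latG 2 (box 2 (25 * ℓ))).edgeFinset → Mid)
    (σ' : (box 2 (25 * ℓ)) → Spin) (κ' : (latG 2 (box 2 (25 * ℓ))).edgeFinset → Mid) :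
    Prop :=
  ∃ (x : (box 2 (25 * ℓ) : Finset (Fin 2 → ℤ)) ⊕ (latG 2 (box 2 (25 * ℓ))).edgeFinset)
    (w : (extGraph (latG 2 (box 2 (25 * ℓ)))).Walk x x),
      0 < w.length ∧
      (∀ z ∈ w.support, z ∈ DisSet σ κ σ' κ' ∧ extInAnn ℓ (box 2 (25 * ℓ)) z) ∧
      (∃ b : (box 2 (25 * ℓ) : Finset (Fin 2 → ℤ)), (b : Fin 2 → ℤ) ∈ vbdry (box 2 (25 * ℓ)) ∧
        ConnectedIn (extGraph (latG 2 (box 2 (25 * ℓ)))) (DisSet σ κ σ' κ') x (Sum.inl b)) ∧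
      (∀ (v b : (box 2 (25 * ℓ) : Finset (Fin 2 → ℤ))),
        (v : Fin 2 → ℤ) ∈ box 2 ℓ → (b : Fin 2 → ℤ) ∈ vbdry (box 2 (25 * ℓ)) →
        ∀ q : (extGraph (latG 2 (box 2 (25 * ℓ)))).Walk (Sum.inl v) (Sum.inl b),
          ∃ z ∈ q.support, z ∈ w.support)

/-- The quenched probability of the lasso event `𝓛(ℓ)` under the plus/minus product of
extended measures in `Λ(25ℓ)` with boundary conditions on `∂_v Λ(25ℓ)`. -/
def lassoExpect (J h ε β : ℝ) (ℓ : ℕ) (η : (Fin 2 → ℤ) → ℝ) : ℝ :=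
  extExp2L 2 (box 2 (25 * ℓ)) J h ε β η (vbdry (box 2 (25 * ℓ))) pl mn
    (fun σ κ σ' κ' => if lassoPred ℓ σ κ σ' κ' then 1 else 0)

/-- The annealed probability of the lasso event `𝓛(ℓ)`. -/
def lassoProb (J h ε β : ℝ) (ℓ : ℕ) : ℝ :=
  ∫ η, lassoExpect J h ε β ℓ η ∂ fieldMeasure 2 (box 2 (25 * ℓ))

end Lasso
section Rectangles

/-- Embedding of `ℤ²` into `ℝ²`. -/
def embL (v : Fin 2 → ℤ) : ℝ × ℝ := ((v 0 : ℝ), (v 1 : ℝ))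

/-- Embedding of the extended lattice into `ℝ²`: vertices to lattice points, midpoints of
edges to the midpoints of the corresponding segments. -/
def embEV {Λ : Finset (Fin 2 → ℤ)} :
    (Λ ⊕ (latG 2 Λ).edgeFinset) → ℝ × ℝ
  | Sum.inl v => embL (v : Fin 2 → ℤ)
  | Sum.inr e =>
      Sym2.lift ⟨fun u w : (Λ : Finset (Fin 2 → ℤ)) =>
          ((1 : ℝ) / 2) • (embL (u : Fin 2 → ℤ) + embL (w : Fin 2 → ℤ)),
        fun a b => by
          show ((1 : ℝ) / 2) • (embL (a : Fin 2 → ℤ) + embL (b : Fin 2 → ℤ)) =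
            ((1 : ℝ) / 2) • (embL (b : Fin 2 → ℤ) + embL (a : Fin 2 → ℤ))
          rw [add_comm]⟩ (e : Sym2 (Λ : Finset (Fin 2 → ℤ)))

/-- The union of the connected components of the disagreement set meeting `∂_v Λ`. -/
def bdryComp (Λ : Finset (Fin 2 → ℤ))
    (σ : Λ → Spin) (κ : (latG 2 Λ).edgeFinset → Mid)
    (σ' : Λ → Spin) (κ' : (latG 2 Λ).edgeFinset → Mid) :
    Set (Λ ⊕ (latG 2 Λ).edgeFinset) :=
  {z | ∃ b : (Λ : Finset (Fin 2 → ℤ)), (b : Fin 2 → ℤ) ∈ vbdry Λ ∧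
    ConnectedIn (extGraph (latG 2 Λ)) (DisSet σ κ σ' κ') z (Sum.inl b)}

/-- The polygonal curve in `ℝ²` associated with `𝒞_{∂_v Λ}`: the union of the straight
segments between embedded adjacent extended vertices of `𝒞_{∂_v Λ}`. -/
def curveSet (Λ : Finset (Fin 2 → ℤ))
    (σ : Λ → Spin) (κ : (latG 2 Λ).edgeFinset → Mid)
    (σ' : Λ → Spin) (κ' : (latG 2 Λ).edgeFinset → Mid) : Set (ℝ × ℝ) :=
  ⋃ (z ∈ bdryComp Λ σ κ σ' κ') (z' ∈ bdryComp Λ σ κ σ' κ')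
      (_ : (extGraph (latG 2 Λ)).Adj z z'),
    segment ℝ (embEV z) (embEV z')

/-- A rectangle in `ℝ²` of arbitrary orientation: a corner, a unit direction of the short
side, and the short side length `w` (the long side has length `5w`). -/
structure Rect where
  corner : ℝ × ℝ
  dir : ℝ × ℝ
  w : ℝ

/-- Rotation of a vector of `ℝ²` by `π/2`. -/
def perp (x : ℝ × ℝ) : ℝ × ℝ := (-x.2, x.1)

/-- The closed rectangle determined by the data of `R`. -/
def Rect.carrier (R : Rect) : Set (ℝ × ℝ) :=
  {x | ∃ s t : ℝ, 0 ≤ s ∧ s ≤ R.w ∧ 0 ≤ t ∧ t ≤ 5 * R.w ∧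
    x = R.corner + s • R.dir + t • perp R.dir}

/-- One of the two short sides of `R`. -/
def Rect.sideA (R : Rect) : Set (ℝ × ℝ) :=
  {x | ∃ s : ℝ, 0 ≤ s ∧ s ≤ R.w ∧ x = R.corner + s • R.dir}

/-- The other short side of `R`. -/
def Rect.sideB (R : Rect) : Set (ℝ × ℝ) :=
  {x | ∃ s : ℝ, 0 ≤ s ∧ s ≤ R.w ∧ x = R.corner + s • R.dir + (5 * R.w) • perp R.dir}

/-- The event `Cross(R)`: the curve associated to `𝒞_{∂_v Λ}` contains a continuous path,
staying in `R`, which connects the two short sides of `R`. -/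
def CrossR (Λ : Finset (Fin 2 → ℤ)) (R : Rect)
    (σ : Λ → Spin) (κ : (latG 2 Λ).edgeFinset → Mid)
    (σ' : Λ → Spin) (κ' : (latG 2 Λ).edgeFinset → Mid) : Prop :=
  ∃ γ : ℝ → ℝ × ℝ, ContinuousOn γ (Set.Icc 0 1) ∧
    (∀ t ∈ Set.Icc (0 : ℝ) 1, γ t ∈ curveSet Λ σ κ σ' κ' ∩ R.carrier) ∧
    γ 0 ∈ R.sideA ∧ γ 1 ∈ R.sideB

/-- A collection of rectangles is well-separated (at scale `ℓ`) if each has unit direction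
vector, aspect ratio `1 × 5` with `10 ≤ ℓ(R) ≤ ℓ/160`, lies in the open `ℓ¹`-annulus of radii
`(5/4)ℓ, (7/4)ℓ`, and distinct rectangles are at mutual `ℓ¹` distance at least
`60·max(ℓ(R₁), ℓ(R₂))`. -/
def WellSeparated (ℓ : ℕ) (ℛ : Finset Rect) : Prop :=
  ∀ R ∈ ℛ, (R.dir.1 ^ 2 + R.dir.2 ^ 2 = 1) ∧
    (10 ≤ R.w ∧ R.w ≤ (ℓ : ℝ) / 160) ∧
    (R.carrier ⊆ {x : ℝ × ℝ | 5 / 4 * (ℓ : ℝ) < |x.1| + |x.2| ∧ |x.1| + |x.2| < 7 / 4 * (ℓ : ℝ)}) ∧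
    ∀ R' ∈ ℛ, R ≠ R' → ∀ p ∈ R.carrier, ∀ q ∈ Rect.carrier R',
      60 * max R.w R'.w ≤ |p.1 - q.1| + |p.2 - q.2|

end Rectangles
section NonAnticipatory

variable {V : Type} [Fintype V] [DecidableEq V]

/-- The extended vertices of `Λ̄`: vertices of `Λ` and midpoints of edges with both
endpoints in `Λ`. -/
def extVerts (G : SimpleGraph V) [DecidableRel G.Adj] (Λ : Finset V) :
    Set (V ⊕ G.edgeFinset) :=
  {z | match z with
    | Sum.inl v => v ∈ Λ
    | Sum.inr e => ∀ u ∈ (e : Sym2 V), u ∈ Λ}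

/-- The forward set `S_F` of `S`: extended vertices outside `S` admitting a path of the
extended graph to `∂_v Λ₁` which is disjoint from `S`. -/
def fwdSet (G : SimpleGraph V) [DecidableRel G.Adj] (Λ₁ : Finset V)
    (S : Set (V ⊕ G.edgeFinset)) : Set (V ⊕ G.edgeFinset) :=
  {u | u ∉ S ∧ ∃ a : V, a ∈ vbdryG G Λ₁ ∧
    ∃ p : (extGraph G).Walk u (Sum.inl a), ∀ z ∈ p.support, z ∉ S}

/-- The backward set `S_B`: the complement of `S_F` in the extended vertex set of `Λ̄₂`. -/
def bwdSet (G : SimpleGraph V) [DecidableRel G.Adj] (Λ₁ Λ₂ : Finset V)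
    (S : Set (V ⊕ G.edgeFinset)) : Set (V ⊕ G.edgeFinset) :=
  extVerts G Λ₂ \ fwdSet G Λ₁ S

/-- `S` is a separating set (between `∂_v Λ₁` and `∂_v Λ₂`). -/
def Separating (G : SimpleGraph V) [DecidableRel G.Adj] (Λ₁ Λ₂ : Finset V)
    (S : Set (V ⊕ G.edgeFinset)) : Prop :=
  (∀ a ∈ vbdryG G Λ₁, Sum.inl a ∈ fwdSet G Λ₁ S) ∧
  (∀ b ∈ vbdryG G Λ₂, Sum.inl b ∈ bwdSet G Λ₁ Λ₂ S)

/-- A random set `𝒮` (a function of the pair of extended configurations) is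
non-anticipatory if, for every deterministic `S`, the event `{𝒮 = S}` is determined by
the restriction of the pair of configurations to `S_B`. -/
def NonAnticipatory (G : SimpleGraph V) [DecidableRel G.Adj] (Λ₁ Λ₂ : Finset V)
    (𝒮 : (V → Spin) → (G.edgeFinset → Mid) → (V → Spin) → (G.edgeFinset → Mid) →
      Set (V ⊕ G.edgeFinset)) : Prop :=
  ∀ (S : Set (V ⊕ G.edgeFinset))
    (σ₁ : V → Spin) (κ₁ : G.edgeFinset → Mid) (σ₁' : V → Spin) (κ₁' : G.edgeFinset → Mid)
    (σ₂ : V → Spin) (κ₂ : G.edgeFinset → Mid) (σ₂' : V → Spin) (κ₂' : G.edgeFinset → Mid),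
    (∀ z ∈ bwdSet G Λ₁ Λ₂ S,
      extConf σ₁ κ₁ z = extConf σ₂ κ₂ z ∧ extConf σ₁' κ₁' z = extConf σ₂' κ₂' z) →
    (𝒮 σ₁ κ₁ σ₁' κ₁' = S ↔ 𝒮 σ₂ κ₂ σ₂' κ₂' = S)

end NonAnticipatory
section Misc

variable {V : Type} [Fintype V] [DecidableEq V]

/-- `𝒞_S`: the union of the connected components of the disagreement set meeting
`{Sum.inl s : s ∈ S}`. -/
def compS (G : SimpleGraph V) [DecidableRel G.Adj] (S : Finset V)
    (σ : V → Spin) (κ : G.edgeFinset → Mid) (σ' : V → Spin) (κ' : G.edgeFinset → Mid) :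
    Set (V ⊕ G.edgeFinset) :=
  {z | ∃ s ∈ S, ConnectedIn (extGraph G) (DisSet σ κ σ' κ') z (Sum.inl s)}

/-- The swap map `R_S^A`: if `𝒞_S` meets `A` it is the identity, and otherwise it
exchanges the two configurations on `𝒞_S`. -/
def Rswap (G : SimpleGraph V) [DecidableRel G.Adj] (A S : Finset V)
    (σ : V → Spin) (κ : G.edgeFinset → Mid) (σ' : V → Spin) (κ' : G.edgeFinset → Mid) :
    ((V → Spin) × (G.edgeFinset → Mid)) × ((V → Spin) × (G.edgeFinset → Mid)) :=
  if ∃ a ∈ A, Sum.inl a ∈ compS G S σ κ σ' κ' then ((σ, κ), (σ', κ'))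
  else
    (((fun v => if Sum.inl v ∈ compS G S σ κ σ' κ' then σ' v else σ v),
      (fun e => if Sum.inr e ∈ compS G S σ κ σ' κ' then κ' e else κ e)),
     ((fun v => if Sum.inl v ∈ compS G S σ κ σ' κ' then σ v else σ' v),
      (fun e => if Sum.inr e ∈ compS G S σ κ σ' κ' then κ e else κ' e)))

/-- The number of vertices of `Λ₁` belonging to `𝒞_{∂_v Λ₂}`, i.e. `|Λ₁ ∩ 𝒞_{∂_v Λ₂}|`. -/
def connCount (Λ₁ Λ₂ : Finset (Fin 2 → ℤ))
    (σ : Λ₂ → Spin) (κ : (latG 2 Λ₂).edgeFinset → Mid)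
    (σ' : Λ₂ → Spin) (κ' : (latG 2 Λ₂).edgeFinset → Mid) : ℝ :=
  ∑ v : (Λ₂ : Finset (Fin 2 → ℤ)),
    if (v : Fin 2 → ℤ) ∈ Λ₁ ∧
        (∃ b : (Λ₂ : Finset (Fin 2 → ℤ)), (b : Fin 2 → ℤ) ∈ vbdry Λ₂ ∧
          ConnectedIn (extGraph (latG 2 Λ₂)) (DisSet σ κ σ' κ') (Sum.inl v) (Sum.inl b))
    then 1 else 0

/-- The standard Gaussian density `φ`. -/
def stdGauss (u : ℝ) : ℝ := (Real.sqrt (2 * Real.pi))⁻¹ * Real.exp (-(u ^ 2 / 2))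

/-- The two-sided standard Gaussian tail `χ(s) = 2 ∫_s^∞ φ(u) du`. -/
def chi (s : ℝ) : ℝ := 2 * ∫ u in Set.Ioi s, stdGauss u

/-- The translate `v + Λ` of a finite subset of `ℤ²`. -/
def trF {d : ℕ} (v : Fin d → ℤ) (Λ : Finset (Fin d → ℤ)) : Finset (Fin d → ℤ) :=
  Λ.image fun x => v + x

end Misc

/-! Summing out the midpoints shows that the spin marginal of the extended measure is the Gibbs
measure of the globally flipped configuration (the extended weight carries the field with the
opposite sign), and flipping does not change the truncated correlation. That correlation is
half the mean of `(σ_u - σ'_u) (σ_v - σ'_v)` under two independent copies. A midpoint value of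
positive weight is `0` or equal to the spins at both ends of its edge, so along a path of the
disagreement set `σ - σ'` and `κ - κ'` keep one sign, and the integrand is `4` when `u ↔_D v`.
On the remaining pairs, exchanging the two copies on the disagreement cluster of `u` preserves
the weight and `σ_v - σ'_v` but reverses `σ_u - σ'_u`, so those pairs contribute nothing. -/

lemma spin_eq_one_or_neg_one (s : Spin) : (s : ℤ) = 1 ∨ (s : ℤ) = -1 := by
  have h := s.2
  simp only [Finset.mem_insert, Finset.mem_singleton] at h
  exact h.symm

def negSpin (s : Spin) : Spin :=
  ⟨-(s : ℤ), by rcases spin_eq_one_or_neg_one s with h | h <;> simp [h]⟩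

lemma spinR_negSpin (s : Spin) : spinR (negSpin s) = -spinR s := by
  simp [spinR, negSpin]

lemma negSpin_involutive : Function.Involutive negSpin :=
  fun s => Subtype.ext (neg_neg (s : ℤ))

section Weights

variable {J β : ℝ}

lemma lampar_sq (hJ : 0 < J) (hβ : 0 < β) :
    lampar J β ^ 2 = exp (J * β) - exp (-(J * β)) := by
  rw [lampar, sq_sqrt (by positivity), sinh_eq]
  ring

lemma lampar_sq_mul_tpar_sq (hJ : 0 < J) (hβ : 0 < β) :
    lampar J β ^ 2 * tpar J β ^ 2 = exp (-(J * β)) := by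
  have hx : 1 < exp (J * β) := one_lt_exp_iff.2 (by positivity)
  have h2 : exp (2 * J * β) = exp (J * β) ^ 2 := by rw [← exp_nat_mul]; ring_nf
  rw [lampar_sq hJ hβ, tpar, inv_pow, sq_sqrt (by rw [h2]; nlinarith), h2, exp_neg]
  have : exp (J * β) ^ 2 - 1 ≠ 0 := by nlinarith
  field_simp

lemma sum_Wgt_mul_Wgt (hJ : 0 < J) (hβ : 0 < β) (a b : Spin) :
    ∑ k : Mid, Wgt J β a k * Wgt J β b k = exp (β * (J * spinR a * spinR b)) := by
  -- the sum is `λ² t² + λ² δ_{a,b} = e^{-Jβ} + 2 sinh (Jβ) δ_{a,b}`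
  have hl := lampar_sq hJ hβ
  have hlt := lampar_sq_mul_tpar_sq hJ hβ
  rw [Finset.sum_coe_sort ({-1, 0, 1} : Finset ℤ) fun k => Wgt J β a k * Wgt J β b k,
    Finset.sum_insert (by decide), Finset.sum_insert (by decide), Finset.sum_singleton]
  rcases spin_eq_one_or_neg_one a with ha | ha <;> rcases spin_eq_one_or_neg_one b with hb | hb <;>
    simp only [Wgt, spinR, ha, hb] <;> norm_num <;>
    first
    | (rw [show β * J = J * β by ring]; linear_combination hl + hlt)
    | (rw [show -(β * J) = -(J * β) by ring]; linear_combination hlt)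

end Weights

section Marginal

variable {V : Type} {J β : ℝ}

lemma sum_edgeW (hJ : 0 < J) (hβ : 0 < β) (σ : V → Spin) (e : Sym2 V) :
    ∑ k : Mid, edgeW J β σ k e = exp (β * edgeE J σ e) := by
  induction e using Sym2.ind with
  | _ a b => exact sum_Wgt_mul_Wgt hJ hβ (σ a) (σ b)

lemma edgeE_negSpin (J : ℝ) (σ : V → Spin) (e : Sym2 V) :
    edgeE J (negSpin ∘ σ) e = edgeE J σ e := by
  induction e using Sym2.ind with
  | _ a b => simp only [edgeE, Sym2.lift_mk, Function.comp_apply, spinR_negSpin]; ring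

variable [Fintype V] [DecidableEq V] (G : SimpleGraph V) [DecidableRel G.Adj] (h ε : ℝ) (η : V → ℝ)

abbrev ExtCfg : Type := (V → Spin) × (G.edgeFinset → Mid)

lemma sum_extWeight (hJ : 0 < J) (hβ : 0 < β) (σ : V → Spin) :
    ∑ κ : G.edgeFinset → Mid, extWeight G J h ε β η σ κ =
      exp (-(β * hamG G J h ε η (negSpin ∘ σ))) := by
  simp only [extWeight, ← Finset.sum_mul]
  rw [← Fintype.prod_sum fun (e : G.edgeFinset) (k : Mid) => edgeW J β σ k e]
  simp only [sum_edgeW hJ hβ, ← exp_sum, ← exp_add, hamG, edgeE_negSpin, Function.comp_apply,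
    spinR_negSpin]
  congr 1
  simp only [← Finset.mul_sum, Finset.sum_coe_sort G.edgeFinset, mul_neg, Finset.sum_neg_distrib]
  ring

lemma sum_mul_gibbs_eq_sum_extWeight (hJ : 0 < J) (hβ : 0 < β) (f : (V → Spin) → ℝ) :
    ∑ σ, f σ * exp (-(β * hamG G J h ε η σ)) =
      ∑ x : ExtCfg G, f (negSpin ∘ x.1) * extWeight G J h ε β η x.1 x.2 := by
  have hflip : Function.Involutive fun σ : V → Spin => negSpin ∘ σ := fun σ => by
    funext v; exact negSpin_involutive (σ v)
  rw [Fintype.sum_prod_type]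
  refine Fintype.sum_bijective _ hflip.bijective _ _ fun σ => ?_
  have hσ : negSpin ∘ negSpin ∘ σ = σ := hflip σ
  dsimp only
  rw [← Finset.mul_sum, sum_extWeight G h ε η hJ hβ, hσ]

end Marginal

section WeightedAverage

variable {α : Type*} [Fintype α]

def wAvg (w f : α → ℝ) : ℝ := (∑ x, f x * w x) / ∑ x, w x

lemma sum_prod_mul_mul (w f g : α → ℝ) :
    ∑ p : α × α, f p.1 * g p.2 * (w p.1 * w p.2) = (∑ x, f x * w x) * ∑ x, g x * w x := by
  rw [Fintype.sum_prod_type, Finset.sum_mul_sum]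
  exact Finset.sum_congr rfl fun _ _ => Finset.sum_congr rfl fun _ _ => by ring

lemma wAvg_neg (w f : α → ℝ) : wAvg w (fun x => -f x) = -wAvg w f := by
  simp only [wAvg, neg_mul, Finset.sum_neg_distrib, neg_div]

lemma wAvg_mul_sub_wAvg_mul_wAvg (w f g : α → ℝ) :
    wAvg w (fun x => f x * g x) - wAvg w f * wAvg w g =
      wAvg (fun p : α × α => w p.1 * w p.2) (fun p => (f p.1 - f p.2) * (g p.1 - g p.2)) / 2 := by
  have hexpand : ∀ p : α × α, (f p.1 - f p.2) * (g p.1 - g p.2) * (w p.1 * w p.2) =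
      f p.1 * g p.1 * (w p.1 * w p.2) + f p.2 * g p.2 * (w p.1 * w p.2) -
        f p.1 * g p.2 * (w p.1 * w p.2) - g p.1 * f p.2 * (w p.1 * w p.2) := fun p => by ring
  have e₁ := sum_prod_mul_mul w (fun x => f x * g x) 1
  have e₂ := sum_prod_mul_mul w 1 (fun x => f x * g x)
  have e₀ := sum_prod_mul_mul w 1 1
  simp only [Pi.one_apply, mul_one, one_mul] at e₀ e₁ e₂
  rw [wAvg, wAvg, wAvg, wAvg, Fintype.sum_congr _ _ hexpand, Finset.sum_sub_distrib,
    Finset.sum_sub_distrib, Finset.sum_add_distrib, e₀, e₁, e₂, sum_prod_mul_mul,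
    sum_prod_mul_mul]
  rcases eq_or_ne (∑ x, w x) 0 with hZ | hZ
  · simp [hZ]
  · field_simp
    ring

end WeightedAverage

section ExtendedAverages

variable {V : Type} [Fintype V] [DecidableEq V] (G : SimpleGraph V) [DecidableRel G.Adj]
  (J h ε β : ℝ) (η : V → ℝ)

lemma thermalG_empty_eq_wAvg (hJ : 0 < J) (hβ : 0 < β) (τ : V → Spin)
    (f : (V → Spin) → ℝ) :
    thermalG G J h ε β η ∅ τ f =
      wAvg (Function.uncurry (extWeight G J h ε β η)) (fun x => f (negSpin ∘ x.1)) := by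
  have hZ := sum_mul_gibbs_eq_sum_extWeight G h ε η hJ hβ 1
  simp only [Pi.one_apply, one_mul] at hZ
  simp only [thermalG, ZG, wAvg, Finset.notMem_empty, IsEmpty.forall_iff, implies_true,
    if_true, hZ, sum_mul_gibbs_eq_sum_extWeight G h ε η hJ hβ f]
  rfl

lemma extExp2_empty_eq_wAvg (τ τ' : V → Spin)
    (F : (V → Spin) → (G.edgeFinset → Mid) → (V → Spin) → (G.edgeFinset → Mid) → ℝ) :
    extExp2 G J h ε β η ∅ τ τ' F =
      wAvg (fun p : ExtCfg G × ExtCfg G =>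
          Function.uncurry (extWeight G J h ε β η) p.1 *
            Function.uncurry (extWeight G J h ε β η) p.2)
        (fun p => F p.1.1 p.1.2 p.2.1 p.2.2) := by
  have hZ := sum_prod_mul_mul (Function.uncurry (extWeight G J h ε β η)) 1 1
  simp only [Pi.one_apply, one_mul] at hZ
  simp only [extExp2, extZ, wAvg, Finset.notMem_empty, IsEmpty.forall_iff, implies_true,
    and_self, if_true, hZ]
  simp only [Fintype.sum_prod_type, Function.uncurry_apply_pair, mul_assoc]

end ExtendedAverages

lemma ConnectedIn.refl {α : Type} {H : SimpleGraph α} {D : Set α} {x : α} (hx : x ∈ D) :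
    ConnectedIn H D x x :=
  ⟨.nil, by simpa using hx⟩

lemma ConnectedIn.concat {α : Type} {H : SimpleGraph α} {D : Set α} {x y z : α}
    (hc : ConnectedIn H D x y) (hadj : H.Adj y z) (hz : z ∈ D) : ConnectedIn H D x z := by
  obtain ⟨p, hp⟩ := hc
  refine ⟨p.concat hadj, fun w hw => ?_⟩
  rw [SimpleGraph.Walk.support_concat, List.mem_append, List.mem_singleton] at hw
  exact hw.elim (hp w) fun hwz => hwz ▸ hz

section SignPropagation

variable {V : Type} [Fintype V] {G : SimpleGraph V} [DecidableRel G.Adj]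
  {J h ε β : ℝ} {η : V → ℝ}

lemma mid_eq_spin_or_zero_of_extWeight_ne_zero {σ : V → Spin} {κ : G.edgeFinset → Mid}
    (hw : extWeight G J h ε β η σ κ ≠ 0) {e : G.edgeFinset} {a : V} (ha : a ∈ (e : Sym2 V)) :
    (κ e : ℤ) = σ a ∨ (κ e : ℤ) = 0 := by
  by_contra! hne
  obtain ⟨b, hb⟩ := Sym2.mem_iff_exists.1 ha
  refine hw (mul_eq_zero_of_left (Finset.prod_eq_zero (Finset.mem_univ e) ?_) _)
  simp [hb, edgeW, Wgt, Ne.symm hne.1, hne.2]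

lemma extConf_sub_mul_pos_of_adj {σ σ' : V → Spin} {κ κ' : G.edgeFinset → Mid}
    (hw : extWeight G J h ε β η σ κ ≠ 0) (hw' : extWeight G J h ε β η σ' κ' ≠ 0)
    {z z' : V ⊕ G.edgeFinset} (hadj : (extGraph G).Adj z z')
    (hz : z ∈ DisSet σ κ σ' κ') (hz' : z' ∈ DisSet σ κ σ' κ') :
    0 < (extConf σ κ z - extConf σ' κ' z) * (extConf σ κ z' - extConf σ' κ' z') := by
  have key : ∀ (a : V) (e : G.edgeFinset), a ∈ (e : Sym2 V) →
      (σ a : ℤ) ≠ σ' a → (κ e : ℤ) ≠ κ' e → 0 < ((σ a : ℤ) - σ' a) * ((κ e : ℤ) - κ' e) := by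
    intro a e ha hσ hκ
    rcases spin_eq_one_or_neg_one (σ a) with h₁ | h₁ <;>
      rcases spin_eq_one_or_neg_one (σ' a) with h₂ | h₂ <;>
      rcases mid_eq_spin_or_zero_of_extWeight_ne_zero hw ha with h₃ | h₃ <;>
      rcases mid_eq_spin_or_zero_of_extWeight_ne_zero hw' ha with h₄ | h₄ <;>
      simp only [h₁, h₂, h₃, h₄] at hσ hκ ⊢ <;> omega
  rcases z with a | e <;> rcases z' with b | f
  · exact hadj.elim
  · exact key a f hadj hz hz'
  · exact mul_comm (extConf σ κ (.inr e) - _) _ ▸ key b e hadj hz' hz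
  · exact hadj.elim

lemma ConnectedIn.extConf_sub_mul_pos {σ σ' : V → Spin} {κ κ' : G.edgeFinset → Mid}
    (hw : extWeight G J h ε β η σ κ ≠ 0) (hw' : extWeight G J h ε β η σ' κ' ≠ 0)
    {z z' : V ⊕ G.edgeFinset} (hc : ConnectedIn (extGraph G) (DisSet σ κ σ' κ') z z') :
    0 < (extConf σ κ z - extConf σ' κ' z) * (extConf σ κ z' - extConf σ' κ' z') := by
  obtain ⟨p, hp⟩ := hc
  induction p with
  | nil => exact mul_self_pos.2 (sub_ne_zero.2 (hp _ (by simp)))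
  | @cons a b c hadj q ih =>
    have hab := extConf_sub_mul_pos_of_adj hw hw' hadj (hp a (by simp)) (hp b (by simp))
    have hbc := ih fun z hz => hp z (by simp [hz])
    nlinarith [mul_pos hab hbc, sq_nonneg (extConf σ κ b - extConf σ' κ' b)]

lemma spinR_sub_mul_spinR_sub_eq_four {σ σ' : V → Spin} {κ κ' : G.edgeFinset → Mid}
    (hw : extWeight G J h ε β η σ κ ≠ 0) (hw' : extWeight G J h ε β η σ' κ' ≠ 0) {u v : V}
    (hc : ConnectedIn (extGraph G) (DisSet σ κ σ' κ') (Sum.inl u) (Sum.inl v)) :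
    (spinR (σ u) - spinR (σ' u)) * (spinR (σ v) - spinR (σ' v)) = 4 := by
  have hpos := hc.extConf_sub_mul_pos hw hw'
  simp only [extConf] at hpos
  simp only [spinR]
  rcases spin_eq_one_or_neg_one (σ u) with h₁ | h₁ <;>
    rcases spin_eq_one_or_neg_one (σ' u) with h₂ | h₂ <;>
    rcases spin_eq_one_or_neg_one (σ v) with h₃ | h₃ <;>
    rcases spin_eq_one_or_neg_one (σ' v) with h₄ | h₄ <;>
    simp only [h₁, h₂, h₃, h₄] at hpos ⊢ <;> (try norm_num at hpos) <;> norm_num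

end SignPropagation

lemma edgeW_mul_edgeW_congr {V : Type} {J β : ℝ} {σ₁ σ₂ τ₁ τ₂ : V → Spin} {k₁ k₂ l₁ l₂ : ℤ} {s : Sym2 V}
    (hs : ∀ a ∈ s, Wgt J β (σ₁ a) k₁ * Wgt J β (σ₂ a) k₂ = Wgt J β (τ₁ a) l₁ * Wgt J β (τ₂ a) l₂) :
    edgeW J β σ₁ k₁ s * edgeW J β σ₂ k₂ s = edgeW J β τ₁ l₁ s * edgeW J β τ₂ l₂ s := by
  induction s using Sym2.ind with
  | _ a b =>
    simp only [edgeW, Sym2.lift_mk]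
    rw [mul_mul_mul_comm, hs a (Sym2.mem_mk_left a b), hs b (Sym2.mem_mk_right a b),
      mul_mul_mul_comm]

section ClusterSwap

variable {V : Type} [Fintype V] {G : SimpleGraph V} [DecidableRel G.Adj]

def swapOn (S : Set (V ⊕ G.edgeFinset)) (x y : ExtCfg G) : ExtCfg G :=
  (fun v => if Sum.inl v ∈ S then y.1 v else x.1 v,
    fun e => if Sum.inr e ∈ S then y.2 e else x.2 e)

variable {S : Set (V ⊕ G.edgeFinset)} {x y : ExtCfg G}

lemma extConf_swapOn (z : V ⊕ G.edgeFinset) :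
    extConf (swapOn S x y).1 (swapOn S x y).2 z =
      if z ∈ S then extConf y.1 y.2 z else extConf x.1 x.2 z := by
  rcases z with v | e <;> simp only [extConf, swapOn] <;> split_ifs <;> rfl

lemma disSet_swapOn :
    DisSet (swapOn S x y).1 (swapOn S x y).2 (swapOn S y x).1 (swapOn S y x).2 =
      DisSet x.1 x.2 y.1 y.2 := by
  ext z
  simp only [DisSet, Set.mem_ofPred_eq, extConf_swapOn]
  split_ifs
  · exact ne_comm
  · rfl

lemma swapOn_swapOn : swapOn S (swapOn S x y) (swapOn S y x) = x := by
  ext v <;> simp only [swapOn] <;> split_ifs <;> rfl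

variable (hS : ∀ z z', (extGraph G).Adj z z' → z ∈ S → z' ∈ DisSet x.1 x.2 y.1 y.2 → z' ∈ S)
include hS

lemma Wgt_swapOn_mul_Wgt_swapOn (J β : ℝ) {a : V} {e : G.edgeFinset} (ha : a ∈ (e : Sym2 V)) :
    Wgt J β (extConf (swapOn S x y).1 (swapOn S x y).2 (.inl a))
        (extConf (swapOn S x y).1 (swapOn S x y).2 (.inr e)) *
      Wgt J β (extConf (swapOn S y x).1 (swapOn S y x).2 (.inl a))
        (extConf (swapOn S y x).1 (swapOn S y x).2 (.inr e)) =
    Wgt J β (extConf x.1 x.2 (.inl a)) (extConf x.1 x.2 (.inr e)) *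
      Wgt J β (extConf y.1 y.2 (.inl a)) (extConf y.1 y.2 (.inr e)) := by
  have agree : ∀ {z z'}, (extGraph G).Adj z z' → z ∈ S → z' ∉ S →
      extConf x.1 x.2 z' = extConf y.1 y.2 z' := fun hadj hz hz' =>
    not_not.1 fun hD => hz' (hS _ _ hadj hz hD)
  simp only [extConf_swapOn]
  by_cases hv : Sum.inl a ∈ S <;> by_cases he : Sum.inr e ∈ S <;>
    simp only [hv, he, if_true, if_false]
  · exact mul_comm _ _
  · rw [agree (show (extGraph G).Adj (.inl a) (.inr e) from ha) hv he]
    exact mul_comm _ _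
  · rw [agree (show (extGraph G).Adj (.inr e) (.inl a) from ha) he hv]
    exact mul_comm _ _

lemma extWeight_swapOn_mul_extWeight_swapOn (J h ε β : ℝ) (η : V → ℝ) :
    extWeight G J h ε β η (swapOn S x y).1 (swapOn S x y).2 *
        extWeight G J h ε β η (swapOn S y x).1 (swapOn S y x).2 =
      extWeight G J h ε β η x.1 x.2 * extWeight G J h ε β η y.1 y.2 := by
  have hedges : (∏ e, edgeW J β (swapOn S x y).1 ((swapOn S x y).2 e) e) *
      (∏ e, edgeW J β (swapOn S y x).1 ((swapOn S y x).2 e) e) =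
      (∏ e, edgeW J β x.1 (x.2 e) e) * ∏ e, edgeW J β y.1 (y.2 e) e := by
    simp only [← Finset.prod_mul_distrib]
    exact Finset.prod_congr rfl fun e _ =>
      edgeW_mul_edgeW_congr fun a ha => Wgt_swapOn_mul_Wgt_swapOn hS J β ha
  have hspins : ∀ v, spinR ((swapOn S x y).1 v) + spinR ((swapOn S y x).1 v) =
      spinR (x.1 v) + spinR (y.1 v) := fun v => by
    simp only [swapOn]
    split_ifs <;> ring
  have hfield : exp (-(β * ∑ v, (h + ε * η v) * spinR ((swapOn S x y).1 v))) *
      exp (-(β * ∑ v, (h + ε * η v) * spinR ((swapOn S y x).1 v))) =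
      exp (-(β * ∑ v, (h + ε * η v) * spinR (x.1 v))) *
        exp (-(β * ∑ v, (h + ε * η v) * spinR (y.1 v))) := by
    simp only [← exp_add, ← neg_add, ← mul_add, ← Finset.sum_add_distrib, hspins]
  simp only [extWeight]
  rw [mul_mul_mul_comm, hedges, hfield, mul_mul_mul_comm]

end ClusterSwap

lemma sum_eq_zero_of_involutive_of_neg {α : Type*} [Fintype α] {f : α → ℝ} {g : α → α}
    (hg : Function.Involutive g) (hf : ∀ x, f (g x) = -f x) : ∑ x, f x = 0 := by
  have h := Equiv.sum_comp (Function.Involutive.toPerm g hg) f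
  simp only [Function.Involutive.coe_toPerm, hf, Finset.sum_neg_distrib] at h
  linarith

section DisagreementCluster

variable {V : Type} [Fintype V] {G : SimpleGraph V} [DecidableRel G.Adj]

def disagreementCluster (D : Set (V ⊕ G.edgeFinset)) (u : V) : Set (V ⊕ G.edgeFinset) :=
  {z | ConnectedIn (extGraph G) D (.inl u) z}

def clusterSwap (u : V) (p : ExtCfg G × ExtCfg G) : ExtCfg G × ExtCfg G :=
  (swapOn (disagreementCluster (DisSet p.1.1 p.1.2 p.2.1 p.2.2) u) p.1 p.2,
    swapOn (disagreementCluster (DisSet p.1.1 p.1.2 p.2.1 p.2.2) u) p.2 p.1)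

variable (u : V) (p : ExtCfg G × ExtCfg G)

lemma disSet_clusterSwap :
    DisSet (clusterSwap u p).1.1 (clusterSwap u p).1.2 (clusterSwap u p).2.1 (clusterSwap u p).2.2 =
      DisSet p.1.1 p.1.2 p.2.1 p.2.2 :=
  disSet_swapOn

lemma clusterSwap_involutive : Function.Involutive (clusterSwap (G := G) u) := fun p => by
  rw [clusterSwap, disSet_clusterSwap]
  exact Prod.ext swapOn_swapOn swapOn_swapOn

lemma extWeight_clusterSwap_mul (J h ε β : ℝ) (η : V → ℝ) :
    Function.uncurry (extWeight G J h ε β η) (clusterSwap u p).1 *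
        Function.uncurry (extWeight G J h ε β η) (clusterSwap u p).2 =
      Function.uncurry (extWeight G J h ε β η) p.1 * Function.uncurry (extWeight G J h ε β η) p.2 :=
  extWeight_swapOn_mul_extWeight_swapOn (fun _ _ hadj hz hD => hz.concat hadj hD) J h ε β η

lemma spinR_sub_spinR_clusterSwap :
    spinR ((clusterSwap u p).1.1 u) - spinR ((clusterSwap u p).2.1 u) =
      -(spinR (p.1.1 u) - spinR (p.2.1 u)) := by
  by_cases hu : Sum.inl u ∈ DisSet p.1.1 p.1.2 p.2.1 p.2.2
  · have hmem : Sum.inl u ∈ disagreementCluster (DisSet p.1.1 p.1.2 p.2.1 p.2.2) u :=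
      ConnectedIn.refl hu
    simp only [clusterSwap, swapOn, hmem, if_true]
    ring
  · have heq : p.1.1 u = p.2.1 u := Subtype.ext (not_not.1 hu)
    simp only [clusterSwap, swapOn, heq]
    split_ifs <;> ring

lemma clusterSwap_spin_of_not_connectedIn {v : V}
    (hv : ¬ ConnectedIn (extGraph G) (DisSet p.1.1 p.1.2 p.2.1 p.2.2) (.inl u) (.inl v)) :
    (clusterSwap u p).1.1 v = p.1.1 v ∧ (clusterSwap u p).2.1 v = p.2.1 v := by
  have hv' : Sum.inl v ∉ disagreementCluster (DisSet p.1.1 p.1.2 p.2.1 p.2.2) u := hv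
  simp only [clusterSwap, swapOn, hv', if_false, and_self]

end DisagreementCluster

section Cancellation

variable {V : Type} [Fintype V] [DecidableEq V] {G : SimpleGraph V} [DecidableRel G.Adj]

lemma wAvg_spinR_sub_mul_spinR_sub (J h ε β : ℝ) (η : V → ℝ) (u v : V) :
    wAvg (fun p : ExtCfg G × ExtCfg G =>
        Function.uncurry (extWeight G J h ε β η) p.1 * Function.uncurry (extWeight G J h ε β η) p.2)
      (fun p => (spinR (p.1.1 u) - spinR (p.2.1 u)) * (spinR (p.1.1 v) - spinR (p.2.1 v))) =
    4 * wAvg (fun p : ExtCfg G × ExtCfg G =>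
        Function.uncurry (extWeight G J h ε β η) p.1 * Function.uncurry (extWeight G J h ε β η) p.2)
      (fun p => if ConnectedIn (extGraph G) (DisSet p.1.1 p.1.2 p.2.1 p.2.2) (.inl u) (.inl v)
        then 1 else 0) := by
  set W₂ : ExtCfg G × ExtCfg G → ℝ := fun p =>
    Function.uncurry (extWeight G J h ε β η) p.1 * Function.uncurry (extWeight G J h ε β η) p.2
  set T : ExtCfg G × ExtCfg G → ℝ := fun p =>
    (spinR (p.1.1 u) - spinR (p.2.1 u)) * (spinR (p.1.1 v) - spinR (p.2.1 v))
  set conn : ExtCfg G × ExtCfg G → Prop := fun p =>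
    ConnectedIn (extGraph G) (DisSet p.1.1 p.1.2 p.2.1 p.2.2) (.inl u) (.inl v)
  have hconnected : ∀ p, conn p → T p * W₂ p = 4 * W₂ p := fun p hp => by
    rcases eq_or_ne (W₂ p) 0 with hW | hW
    · rw [hW, mul_zero, mul_zero]
    · rw [show T p = 4 from spinR_sub_mul_spinR_sub_eq_four (left_ne_zero_of_mul hW)
        (right_ne_zero_of_mul hW) hp]
  have hcancel : ∑ p, (if conn p then 0 else T p * W₂ p) = 0 := by
    refine sum_eq_zero_of_involutive_of_neg (clusterSwap_involutive u) fun p => ?_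
    have hconn : conn (clusterSwap u p) ↔ conn p := by
      simp only [conn, disSet_clusterSwap]
    by_cases hp : conn p
    · simp [hp, hconn]
    · obtain ⟨h₁, h₂⟩ := clusterSwap_spin_of_not_connectedIn u p hp
      simp only [hp, hconn, if_false, T, W₂, spinR_sub_spinR_clusterSwap, h₁, h₂,
        extWeight_clusterSwap_mul]
      ring
  have hsplit : ∀ p, T p * W₂ p =
      4 * ((if conn p then 1 else 0) * W₂ p) + (if conn p then 0 else T p * W₂ p) := fun p => by
    by_cases hp : conn p
    · simp [hp, hconnected p hp]
    · simp [hp]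
  simp only [wAvg, Fintype.sum_congr _ _ hsplit, Finset.sum_add_distrib, hcancel, add_zero,
    ← Finset.mul_sum, mul_div_assoc]
  rfl

end Cancellation

theorem truncated_correlation_eq_disagreement_general
    {V : Type} [Fintype V] [DecidableEq V] (G : SimpleGraph V) [DecidableRel G.Adj]
    (J h ε β : ℝ) (hJ : 0 < J) (hβ : 0 < β) (η : V → ℝ) (u v : V) :
    thermalG G J h ε β η ∅ (fun _ => pl) (fun σ => spinR (σ u) * spinR (σ v)) -
      thermalG G J h ε β η ∅ (fun _ => pl) (fun σ => spinR (σ u)) *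
        thermalG G J h ε β η ∅ (fun _ => pl) (fun σ => spinR (σ v)) =
    2 * extExp2 G J h ε β η ∅ (fun _ => pl) (fun _ => pl)
      (fun σ κ σ' κ' =>
        if ConnectedIn (extGraph G) (DisSet σ κ σ' κ') (Sum.inl u) (Sum.inl v)
        then 1 else 0) := by
  simp only [thermalG_empty_eq_wAvg G J h ε β η hJ hβ, extExp2_empty_eq_wAvg,
    Function.comp_apply, spinR_negSpin, neg_mul_neg, wAvg_neg]
  rw [wAvg_mul_sub_wAvg_mul_wAvg, wAvg_spinR_sub_mul_spinR_sub]
  ring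

/-- **Disagreement-percolation representation of truncated correlations**
(Proposition 3.1, item 1): for the RFIM on a finite graph `G`, at `β ∈ (0,∞)` and any
field realization `η`, and any vertices `u, v`,
`⟨σ_u; σ_v⟩ = 2 ⟨⟨ 1[u ↔_D v] ⟩⟩`, where the double brackets denote expectation with
respect to two independent identically distributed copies of the extended measure. -/
theorem truncated_correlation_eq_disagreement
    {V : Type} [Fintype V] [DecidableEq V] (G : SimpleGraph V) [DecidableRel G.Adj]
    (J h ε β : ℝ) (hJ : 0 < J) (hε : 0 < ε) (hβ : 0 < β) (η : V → ℝ) (u v : V) :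
    thermalG G J h ε β η ∅ (fun _ => pl) (fun σ => spinR (σ u) * spinR (σ v)) -
      thermalG G J h ε β η ∅ (fun _ => pl) (fun σ => spinR (σ u)) *
        thermalG G J h ε β η ∅ (fun _ => pl) (fun σ => spinR (σ v)) =
    2 * extExp2 G J h ε β η ∅ (fun _ => pl) (fun _ => pl)
      (fun σ κ σ' κ' =>
        if ConnectedIn (extGraph G) (DisSet σ κ σ' κ') (Sum.inl u) (Sum.inl v)
        then 1 else 0) :=
  truncated_correlation_eq_disagreement_general G J h ε β hJ hβ η u v

end RFIM
end
end

section
/- Let Λ₁ ⊂ Λ₂ be finite subgraphs of ℤ² whose internal vertex boundaries are disjoint, let β ∈ (0,∞), J > 0, h ∈ ℝ, ε > 0. Then for every field realization η : Λ₂ → ℝ, the surface tension satisfies the exact integral identity T_{Λ₁,Λ₂}(η) = 2ε ∫_ℝ D_{Λ₁,Λ₂}(η^{(t)}) dt, where η^{(t)} is obtained from η by adding a uniform field of intensity t on Λ₁, i.e., η^{(t)}_v = η_v + t for v ∈ Λ₁ and η^{(t)}_v = η_v otherwise. -/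
open MeasureTheory ProbabilityTheory Real BigOperators
open scoped Classical

noncomputable section
section Analysis

open Filter Set Topology

lemma integrableOn_Ioi_deriv_sub_of_tendsto {f f' : ℝ → ℝ} {c a : ℝ}
    (hf : ∀ t, HasDerivAt f (f' t) t) (hle : ∀ t, f' t ≤ c)
    (htop : Tendsto (fun t => f t - c * t) atTop (𝓝 a)) :
    IntegrableOn (fun t => f' t - c) (Ioi 0) :=
  integrableOn_Ioi_deriv_of_nonpos'
    (fun t _ => by simpa using (hf t).fun_sub ((hasDerivAt_id' t).const_mul c))
    (fun t _ => sub_nonpos.2 (hle t)) htop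

lemma integrableOn_Ioi_deriv_comp_neg_add_of_tendsto {f f' : ℝ → ℝ} {c b : ℝ}
    (hf : ∀ t, HasDerivAt f (f' t) t) (hge : ∀ t, -c ≤ f' t)
    (hbot : Tendsto (fun t => f t + c * t) atBot (𝓝 b)) :
    IntegrableOn (fun t => f' (-t) + c) (Ioi 0) := by
  have hrefl := integrableOn_Ioi_deriv_sub_of_tendsto (f := fun t => f (-t))
    (fun t => by simpa [Function.comp_def] using (hf (-t)).comp t (hasDerivAt_neg t))
    (fun t => by linarith [hge (-t)])
    ((hbot.comp tendsto_neg_atTop_atBot).congr fun t => by simp [sub_eq_add_neg])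
  exact hrefl.neg.congr_fun (fun t _ => by simp only [Pi.neg_apply]; ring) measurableSet_Ioi

theorem integral_deriv_sub_deriv_eq_of_tendsto {f g f' g' : ℝ → ℝ} {c a a' b b' : ℝ}
    (hf : ∀ t, HasDerivAt f (f' t) t) (hg : ∀ t, HasDerivAt g (g' t) t)
    (hf' : ∀ t, |f' t| ≤ c) (hg' : ∀ t, |g' t| ≤ c)
    (hf_top : Tendsto (fun t => f t - c * t) atTop (𝓝 a))
    (hg_top : Tendsto (fun t => g t - c * t) atTop (𝓝 a'))
    (hf_bot : Tendsto (fun t => f t + c * t) atBot (𝓝 b))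
    (hg_bot : Tendsto (fun t => g t + c * t) atBot (𝓝 b')) :
    ∫ t, (f' t - g' t) = (a - a') - (b - b') := by
  have hint : Integrable (fun t => f' t - g' t) := by
    rw [← integrableOn_univ, ← Iio_union_Ici (a := (0 : ℝ)), integrableOn_union,
      integrableOn_Ici_iff_integrableOn_Ioi]
    constructor
    · rw [← (Measure.measurePreserving_neg (volume : Measure ℝ)).integrableOn_comp_preimage
        (Homeomorph.neg ℝ).measurableEmbedding]
      simp only [neg_preimage, neg_Iio, neg_zero]
      refine ((integrableOn_Ioi_deriv_comp_neg_add_of_tendsto hf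
        (fun t => (abs_le.1 (hf' t)).1) hf_bot).sub
        (integrableOn_Ioi_deriv_comp_neg_add_of_tendsto hg
        (fun t => (abs_le.1 (hg' t)).1) hg_bot)).congr_fun (fun t _ => ?_) measurableSet_Ioi
      simp
    · refine ((integrableOn_Ioi_deriv_sub_of_tendsto hf
        (fun t => (abs_le.1 (hf' t)).2) hf_top).sub
        (integrableOn_Ioi_deriv_sub_of_tendsto hg
        (fun t => (abs_le.1 (hg' t)).2) hg_top)).congr_fun (fun t _ => ?_) measurableSet_Ioi
      simp
  refine integral_of_hasDerivAt_of_tendsto (fun t => (hf t).fun_sub (hg t)) hint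
    ((hf_bot.sub hg_bot).congr fun t => ?_) ((hf_top.sub hg_top).congr fun t => ?_) <;> ring

lemma hasDerivAt_sum_mul_exp {ι : Type*} (s : Finset ι) (w m : ι → ℝ) (t : ℝ) :
    HasDerivAt (fun u => ∑ i ∈ s, w i * exp (m i * u))
      (∑ i ∈ s, w i * (m i * exp (m i * t))) t :=
  HasDerivAt.fun_sum fun i _ => by
    simpa [mul_comm] using (((hasDerivAt_id t).const_mul (m i)).exp).const_mul (w i)

lemma tendsto_sum_mul_exp_mul_exp_atTop {ι : Type*} (s : Finset ι) (w m : ι → ℝ) {c : ℝ}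
    (hm : ∀ i ∈ s, m i ≤ c) :
    Tendsto (fun t => (∑ i ∈ s, w i * exp (m i * t)) * exp (-(c * t))) atTop
      (𝓝 (∑ i ∈ s, if m i = c then w i else 0)) := by
  have hform : ∀ t, (∑ i ∈ s, w i * exp (m i * t)) * exp (-(c * t)) =
      ∑ i ∈ s, w i * exp ((m i - c) * t) := fun t => by
    rw [Finset.sum_mul]
    refine Finset.sum_congr rfl fun i _ => ?_
    rw [mul_assoc, ← exp_add, sub_mul, sub_eq_add_neg]
  simp_rw [hform]
  refine tendsto_finsetSum s fun i hi => ?_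
  split_ifs with hmc
  · simp [hmc]
  · have hneg : m i - c < 0 := sub_neg.2 (lt_of_le_of_ne (hm i hi) hmc)
    simpa using (tendsto_exp_atBot.comp
      ((tendsto_const_mul_atBot_of_neg hneg).2 tendsto_id)).const_mul (w i)

lemma tendsto_sum_mul_exp_mul_exp_atBot {ι : Type*} (s : Finset ι) (w m : ι → ℝ) {c : ℝ}
    (hm : ∀ i ∈ s, -c ≤ m i) :
    Tendsto (fun t => (∑ i ∈ s, w i * exp (m i * t)) * exp (c * t)) atBot
      (𝓝 (∑ i ∈ s, if m i = -c then w i else 0)) := by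
  have hrefl := (tendsto_sum_mul_exp_mul_exp_atTop s w (fun i => -m i) (c := c)
    fun i hi => neg_le.1 (hm i hi)).comp tendsto_neg_atBot_atTop
  simpa [neg_eq_iff_eq_neg, Function.comp_def] using hrefl

end Analysis

namespace RFIM

section Spins

lemma spinR_eq_one_iff (s : Spin) : spinR s = 1 ↔ s = pl := by
  rcases s with ⟨v, hv⟩
  simp only [Finset.mem_insert, Finset.mem_singleton] at hv
  rcases hv with rfl | rfl <;> norm_num [spinR, pl]

lemma spinR_eq_neg_one_iff (s : Spin) : spinR s = -1 ↔ s = mn := by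
  rcases s with ⟨v, hv⟩
  simp only [Finset.mem_insert, Finset.mem_singleton] at hv
  rcases hv with rfl | rfl <;> norm_num [spinR, mn]

lemma abs_spinR (s : Spin) : |spinR s| = 1 := by
  rcases s with ⟨v, hv⟩
  simp only [Finset.mem_insert, Finset.mem_singleton] at hv
  rcases hv with rfl | rfl <;> norm_num [spinR]

variable {V : Type}

def magn (P : Finset V) (σ : V → Spin) : ℝ := ∑ v ∈ P, spinR (σ v)

lemma abs_magn_le (P : Finset V) (σ : V → Spin) : |magn P σ| ≤ P.card :=
  (Finset.abs_sum_le_sum_abs _ _).trans_eq (by simp [abs_spinR])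

lemma magn_eq_card_iff (P : Finset V) (σ : V → Spin) :
    magn P σ = P.card ↔ ∀ v ∈ P, σ v = pl := by
  have h := Finset.sum_eq_sum_iff_of_le (s := P) (f := fun v => spinR (σ v)) (g := fun _ => 1)
    fun v _ => (abs_le.1 ((abs_spinR (σ v)).le)).2
  simpa [magn, spinR_eq_one_iff] using h

lemma magn_eq_neg_card_iff (P : Finset V) (σ : V → Spin) :
    magn P σ = -P.card ↔ ∀ v ∈ P, σ v = mn := by
  have h := Finset.sum_eq_sum_iff_of_le (s := P) (f := fun _ => (-1 : ℝ))
    (g := fun v => spinR (σ v)) fun v _ => (abs_le.1 ((abs_spinR (σ v)).le)).1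
  simp_rw [← spinR_eq_neg_one_iff]
  simpa [magn, eq_comm] using h

end Spins

section Tilt

open Filter Topology

variable {V : Type} [Fintype V] [DecidableEq V]

def tilt (P : Finset V) (t : ℝ) (η : V → ℝ) : V → ℝ := fun v => η v + if v ∈ P then t else 0

variable (G : SimpleGraph V) [DecidableRel G.Adj] (J h ε β : ℝ) (η : V → ℝ)

def boltzmannOn (A : Finset V) (τ σ : V → Spin) : ℝ :=
  if ∀ v ∈ A, σ v = τ v then exp (-(β * hamG G J h ε η σ)) else 0

lemma ZG_pos (A : Finset V) (τ : V → Spin) : 0 < ZG G J h ε β η A τ :=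
  Finset.sum_pos' (fun σ _ => by positivity) ⟨τ, Finset.mem_univ _, by simp [exp_pos]⟩

lemma Z2G_pos {A₁ A₂ : Finset V} (hA : Disjoint A₁ A₂) (s₁ s₂ : Spin) :
    0 < Z2G G J h ε β η A₁ A₂ s₁ s₂ := by
  refine Finset.sum_pos' (fun σ _ => by positivity)
    ⟨fun v => if v ∈ A₁ then s₁ else s₂, Finset.mem_univ _, ?_⟩
  rw [if_pos ⟨fun v hv => if_pos hv, fun v hv => if_neg (Finset.disjoint_right.1 hA hv)⟩]
  exact exp_pos _

variable {G J h ε β η} in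
lemma abs_thermalG_le {A : Finset V} {τ : V → Spin} {f : (V → Spin) → ℝ} {c : ℝ}
    (hf : ∀ σ, |f σ| ≤ c) : |thermalG G J h ε β η A τ f| ≤ c := by
  have hZ := ZG_pos G J h ε β η A τ
  rw [thermalG, abs_div, abs_of_pos hZ, div_le_iff₀ hZ, ZG, Finset.mul_sum]
  refine (Finset.abs_sum_le_sum_abs _ _).trans (Finset.sum_le_sum fun σ _ => ?_)
  split_ifs
  · rw [abs_mul, abs_of_pos (exp_pos _)]
    exact mul_le_mul_of_nonneg_right (hf σ) (exp_pos _).le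
  · simp

lemma thermalG_finset_sum (A : Finset V) (τ : V → Spin) {ι : Type*} (s : Finset ι)
    (f : ι → (V → Spin) → ℝ) :
    thermalG G J h ε β η A τ (fun σ => ∑ i ∈ s, f i σ) =
      ∑ i ∈ s, thermalG G J h ε β η A τ (f i) := by
  simp only [thermalG, ← Finset.sum_div]
  rw [Finset.sum_comm]
  congr 1
  refine Finset.sum_congr rfl fun σ _ => ?_
  split_ifs <;> simp [Finset.sum_mul]

variable {G J h ε β η} in
lemma hamG_tilt (P : Finset V) (t : ℝ) (σ : V → Spin) :
    hamG G J h ε (tilt P t η) σ = hamG G J h ε η σ - ε * t * magn P σ := by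
  have hfield : ∀ v, (h + ε * tilt P t η v) * spinR (σ v) =
      (h + ε * η v) * spinR (σ v) + if v ∈ P then ε * t * spinR (σ v) else 0 := fun v => by
    by_cases hv : v ∈ P <;> simp [tilt, hv]
    ring
  simp only [hamG, hfield, Finset.sum_add_distrib, Finset.sum_ite_mem, Finset.univ_inter, magn,
    Finset.mul_sum]
  ring

lemma exp_neg_hamG_tilt (P : Finset V) (t : ℝ) (σ : V → Spin) :
    exp (-(β * hamG G J h ε (tilt P t η) σ)) =
      exp (-(β * hamG G J h ε η σ)) * exp (β * ε * magn P σ * t) := by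
  rw [hamG_tilt, ← exp_add]
  ring_nf

lemma ZG_tilt (P A : Finset V) (τ : V → Spin) (t : ℝ) :
    ZG G J h ε β (tilt P t η) A τ =
      ∑ σ, boltzmannOn G J h ε β η A τ σ * exp (β * ε * magn P σ * t) := by
  refine Finset.sum_congr rfl fun σ _ => ?_
  rw [boltzmannOn, exp_neg_hamG_tilt]
  split_ifs <;> simp

lemma thermalG_tilt_mul_ZG (P A : Finset V) (τ : V → Spin) (t : ℝ) (f : (V → Spin) → ℝ) :
    thermalG G J h ε β (tilt P t η) A τ f * ZG G J h ε β (tilt P t η) A τ =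
      ∑ σ, boltzmannOn G J h ε β η A τ σ * (f σ * exp (β * ε * magn P σ * t)) := by
  rw [thermalG, div_mul_cancel₀ _ (ZG_pos G J h ε β _ A τ).ne']
  refine Finset.sum_congr rfl fun σ _ => ?_
  rw [boltzmannOn, exp_neg_hamG_tilt]
  split_ifs <;> ring

lemma hasDerivAt_log_ZG_tilt (hβ : β ≠ 0) (P A : Finset V) (τ : V → Spin) (t : ℝ) :
    HasDerivAt (fun u => β⁻¹ * log (ZG G J h ε β (tilt P u η) A τ))
      (ε * thermalG G J h ε β (tilt P t η) A τ (magn P)) t := by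
  have hZ := ZG_pos G J h ε β (tilt P t η) A τ
  have hderiv : HasDerivAt (fun u => ZG G J h ε β (tilt P u η) A τ)
      (β * ε * (thermalG G J h ε β (tilt P t η) A τ (magn P) * ZG G J h ε β (tilt P t η) A τ))
      t := by
    rw [thermalG_tilt_mul_ZG, Finset.mul_sum]
    simp_rw [ZG_tilt G J h ε β η P A τ]
    refine (hasDerivAt_sum_mul_exp _ _ (fun σ => β * ε * magn P σ) t).congr_deriv
      (Finset.sum_congr rfl fun σ _ => by ring)
  refine ((hderiv.log hZ.ne').const_mul β⁻¹).congr_deriv ?_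
  field_simp

lemma tendsto_log_ZG_tilt_atTop (hβ : 0 < β) (hε : 0 < ε) {P A : Finset V}
    (hPA : Disjoint P A) (s : Spin) :
    Tendsto (fun t => β⁻¹ * log (ZG G J h ε β (tilt P t η) A (fun _ => s)) - ε * P.card * t)
      atTop (𝓝 (β⁻¹ * log (Z2G G J h ε β η P A pl s))) := by
  have hβε : 0 < β * ε := mul_pos hβ hε
  have hlim := tendsto_sum_mul_exp_mul_exp_atTop Finset.univ (boltzmannOn G J h ε β η A fun _ => s)
    (fun σ => β * ε * magn P σ) (c := β * ε * P.card)
    fun σ _ => mul_le_mul_of_nonneg_left (abs_le.1 (abs_magn_le P σ)).2 hβε.le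
  have hlimit : (∑ σ, if β * ε * magn P σ = β * ε * P.card then
      boltzmannOn G J h ε β η A (fun _ => s) σ else 0) = Z2G G J h ε β η P A pl s :=
    Finset.sum_congr rfl fun σ _ => by
      simp only [mul_right_inj' hβε.ne', magn_eq_card_iff, ite_and, boltzmannOn]
  rw [hlimit] at hlim
  refine ((hlim.log (Z2G_pos G J h ε β η hPA pl s).ne').const_mul β⁻¹).congr fun t => ?_
  rw [← ZG_tilt, log_mul (ZG_pos G J h ε β _ A _).ne' (exp_pos _).ne', log_exp]
  field_simp
  ring

lemma tendsto_log_ZG_tilt_atBot (hβ : 0 < β) (hε : 0 < ε) {P A : Finset V}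
    (hPA : Disjoint P A) (s : Spin) :
    Tendsto (fun t => β⁻¹ * log (ZG G J h ε β (tilt P t η) A (fun _ => s)) + ε * P.card * t)
      atBot (𝓝 (β⁻¹ * log (Z2G G J h ε β η P A mn s))) := by
  have hβε : 0 < β * ε := mul_pos hβ hε
  have hlim := tendsto_sum_mul_exp_mul_exp_atBot Finset.univ (boltzmannOn G J h ε β η A fun _ => s)
    (fun σ => β * ε * magn P σ) (c := β * ε * P.card)
    fun σ _ => by nlinarith [(abs_le.1 (abs_magn_le P σ)).1]
  have hlimit : (∑ σ, if β * ε * magn P σ = -(β * ε * P.card) then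
      boltzmannOn G J h ε β η A (fun _ => s) σ else 0) = Z2G G J h ε β η P A mn s :=
    Finset.sum_congr rfl fun σ _ => by
      simp only [← mul_neg, mul_right_inj' hβε.ne', magn_eq_neg_card_iff, ite_and, boltzmannOn]
  rw [hlimit] at hlim
  refine ((hlim.log (Z2G_pos G J h ε β η hPA mn s).ne').const_mul β⁻¹).congr fun t => ?_
  rw [← ZG_tilt, log_mul (ZG_pos G J h ε β _ A _).ne' (exp_pos _).ne', log_exp]
  field_simp

end Tilt

section Exchange

variable {V : Type} [Fintype V] [DecidableEq V]
  (G : SimpleGraph V) [DecidableRel G.Adj] (J h ε β : ℝ) (η : V → ℝ)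

lemma hamG_piecewise_add {D : Finset V} {σ σ' : V → Spin}
    (hagree : ∀ u v, G.Adj u v → u ∈ D → v ∉ D → σ v = σ' v) :
    hamG G J h ε η (D.piecewise σ' σ) + hamG G J h ε η (D.piecewise σ σ') =
      hamG G J h ε η σ + hamG G J h ε η σ' := by
  have hedge : ∀ e ∈ G.edgeFinset,
      edgeE J (D.piecewise σ' σ) e + edgeE J (D.piecewise σ σ') e = edgeE J σ e + edgeE J σ' e := by
    intro e he
    induction e using Sym2.ind with
    | _ u v =>
      have hadj : G.Adj u v := SimpleGraph.mem_edgeFinset.1 he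
      by_cases hu : u ∈ D <;> by_cases hv : v ∈ D <;>
        simp [edgeE, hu, hv, hagree u v hadj, hagree v u hadj.symm] <;> ring
  have hvertex : ∀ v, (h + ε * η v) * spinR (D.piecewise σ' σ v) +
      (h + ε * η v) * spinR (D.piecewise σ σ' v) =
      (h + ε * η v) * spinR (σ v) + (h + ε * η v) * spinR (σ' v) := fun v => by
    by_cases hv : v ∈ D <;> simp [hv]
    ring
  have hedges := Finset.sum_congr rfl hedge
  have hvertices := Finset.sum_congr rfl fun v (_ : v ∈ Finset.univ) => hvertex v
  simp only [Finset.sum_add_distrib] at hedges hvertices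
  simp only [hamG]
  linarith

lemma Z2G_mul_Z2G_exchange {P B₁ B₂ : Finset V} (hB₁ : B₁ ⊆ P) (hB₂ : Disjoint P B₂)
    (hsep : ∀ u v, G.Adj u v → u ∈ P \ B₁ → v ∈ P) (s s₂ s₂' : Spin) :
    Z2G G J h ε β η B₁ B₂ s s₂ * Z2G G J h ε β η P B₂ s s₂' =
      Z2G G J h ε β η P B₂ s s₂ * Z2G G J h ε β η B₁ B₂ s s₂' := by
  set D := P \ B₁ with hD
  have hswap : Function.Involutive fun p : (V → Spin) × (V → Spin) =>
      (D.piecewise p.2 p.1, D.piecewise p.1 p.2) := fun p => by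
    ext v <;> by_cases hv : v ∈ D <;> simp [hv]
  have hB₂P : ∀ v ∈ B₂, v ∉ P := fun v hv hvP => Finset.disjoint_left.1 hB₂ hvP hv
  have hpair : ∀ σ σ' : V → Spin,
      (if ((∀ v ∈ B₁, σ v = s) ∧ (∀ v ∈ B₂, σ v = s₂)) ∧
          ((∀ v ∈ P, σ' v = s) ∧ (∀ v ∈ B₂, σ' v = s₂')) then
        exp (-(β * hamG G J h ε η σ)) * exp (-(β * hamG G J h ε η σ')) else 0) =
      (if ((∀ v ∈ P, D.piecewise σ' σ v = s) ∧ (∀ v ∈ B₂, D.piecewise σ' σ v = s₂)) ∧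
          ((∀ v ∈ B₁, D.piecewise σ σ' v = s) ∧ (∀ v ∈ B₂, D.piecewise σ σ' v = s₂')) then
        exp (-(β * hamG G J h ε η (D.piecewise σ' σ))) *
          exp (-(β * hamG G J h ε η (D.piecewise σ σ'))) else 0) := by
    intro σ σ'
    have hconstraints : ((∀ v ∈ B₁, σ v = s) ∧ (∀ v ∈ B₂, σ v = s₂)) ∧
        ((∀ v ∈ P, σ' v = s) ∧ (∀ v ∈ B₂, σ' v = s₂')) ↔
        ((∀ v ∈ P, D.piecewise σ' σ v = s) ∧ (∀ v ∈ B₂, D.piecewise σ' σ v = s₂)) ∧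
        ((∀ v ∈ B₁, D.piecewise σ σ' v = s) ∧ (∀ v ∈ B₂, D.piecewise σ σ' v = s₂')) := by
      simp only [Finset.piecewise, hD, Finset.mem_sdiff]
      grind
    by_cases hc : ((∀ v ∈ B₁, σ v = s) ∧ (∀ v ∈ B₂, σ v = s₂)) ∧
        ((∀ v ∈ P, σ' v = s) ∧ (∀ v ∈ B₂, σ' v = s₂'))
    · rw [if_pos hc, if_pos (hconstraints.1 hc), ← exp_add, ← exp_add]
      have hagree : ∀ u v, G.Adj u v → u ∈ D → v ∉ D → σ v = σ' v := fun u v huv hu hv => by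
        have hvP := hsep u v huv hu
        have hvB₁ : v ∈ B₁ := by simpa [hD, hvP] using hv
        rw [hc.1.1 v hvB₁, hc.2.1 v hvP]
      congr 1
      linear_combination β * hamG_piecewise_add G J h ε η hagree
    · rw [if_neg hc, if_neg (mt hconstraints.2 hc)]
  simp only [Z2G, Finset.sum_mul_sum, ← Fintype.sum_prod_type', ite_zero_mul_ite_zero]
  exact Fintype.sum_equiv hswap.toPerm _ _ fun p => hpair p.1 p.2

end Exchange

section CrossRatio

variable {V : Type} [Fintype V] [DecidableEq V]
  (G : SimpleGraph V) [DecidableRel G.Adj] (J h ε β : ℝ) (η : V → ℝ)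

lemma Z2G_crossRatio_eq {P B₁ B₂ : Finset V} (hB₁ : B₁ ⊆ P) (hB₂ : Disjoint P B₂)
    (hsep : ∀ u v, G.Adj u v → u ∈ P \ B₁ → v ∈ P) :
    Z2G G J h ε β η B₁ B₂ pl pl * Z2G G J h ε β η B₁ B₂ mn mn /
        (Z2G G J h ε β η B₁ B₂ pl mn * Z2G G J h ε β η B₁ B₂ mn pl) =
      Z2G G J h ε β η P B₂ pl pl * Z2G G J h ε β η P B₂ mn mn /
        (Z2G G J h ε β η P B₂ pl mn * Z2G G J h ε β η P B₂ mn pl) := by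
  have hX := Z2G_pos G J h ε β η (hB₂.mono_left hB₁)
  have hY := Z2G_pos G J h ε β η hB₂
  rw [div_eq_div_iff (mul_pos (hX pl mn) (hX mn pl)).ne' (mul_pos (hY pl mn) (hY mn pl)).ne']
  linear_combination
    Z2G G J h ε β η B₁ B₂ mn mn * Z2G G J h ε β η P B₂ mn pl *
        Z2G_mul_Z2G_exchange G J h ε β η hB₁ hB₂ hsep pl pl mn +
      Z2G G J h ε β η P B₂ pl pl * Z2G G J h ε β η B₁ B₂ pl mn *
        Z2G_mul_Z2G_exchange G J h ε β η hB₁ hB₂ hsep mn mn pl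

theorem log_Z2G_crossRatio_eq_integral (hβ : 0 < β) (hε : 0 < ε) {P B₁ B₂ : Finset V}
    (hB₁ : B₁ ⊆ P) (hB₂ : Disjoint P B₂) (hsep : ∀ u v, G.Adj u v → u ∈ P \ B₁ → v ∈ P) :
    β⁻¹ * log (Z2G G J h ε β η B₁ B₂ pl pl * Z2G G J h ε β η B₁ B₂ mn mn /
        (Z2G G J h ε β η B₁ B₂ pl mn * Z2G G J h ε β η B₁ B₂ mn pl)) =
      ∫ t, ε * (thermalG G J h ε β (tilt P t η) B₂ (fun _ => pl) (magn P) -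
        thermalG G J h ε β (tilt P t η) B₂ (fun _ => mn) (magn P)) := by
  have hY := Z2G_pos G J h ε β η hB₂
  have hbound : ∀ (s : Spin) t,
      |ε * thermalG G J h ε β (tilt P t η) B₂ (fun _ => s) (magn P)| ≤ ε * P.card := by
    intro s t
    rw [abs_mul, abs_of_pos hε]
    exact mul_le_mul_of_nonneg_left (abs_thermalG_le (abs_magn_le P)) hε.le
  simp_rw [mul_sub]
  rw [integral_deriv_sub_deriv_eq_of_tendsto
      (hasDerivAt_log_ZG_tilt G J h ε β η hβ.ne' P B₂ _)
      (hasDerivAt_log_ZG_tilt G J h ε β η hβ.ne' P B₂ _)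
      (hbound pl) (hbound mn)
      (tendsto_log_ZG_tilt_atTop G J h ε β η hβ hε hB₂ pl)
      (tendsto_log_ZG_tilt_atTop G J h ε β η hβ hε hB₂ mn)
      (tendsto_log_ZG_tilt_atBot G J h ε β η hβ hε hB₂ pl)
      (tendsto_log_ZG_tilt_atBot G J h ε β η hβ hε hB₂ mn),
    Z2G_crossRatio_eq G J h ε β η hB₁ hB₂ hsep,
    log_div (mul_pos (hY pl pl) (hY mn mn)).ne' (mul_pos (hY pl mn) (hY mn pl)).ne',
    log_mul (hY pl pl).ne' (hY mn mn).ne', log_mul (hY pl mn).ne' (hY mn pl).ne']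
  ring

end CrossRatio

section Lattice

variable {d : ℕ}

lemma mem_nbrs_of_dist1_eq_one {u v : Fin d → ℤ} (huv : dist1 u v = 1) : v ∈ nbrs u := by
  rw [dist1] at huv
  obtain ⟨i, hi⟩ : ∃ i, u i ≠ v i := by
    by_contra! hall
    simp [hall] at huv
  have hsplit := Finset.add_sum_erase Finset.univ (fun j => |u j - v j|) (Finset.mem_univ i)
  have hrest_nonneg : 0 ≤ ∑ j ∈ Finset.univ.erase i, |u j - v j| :=
    Finset.sum_nonneg fun j _ => abs_nonneg _
  have hi_pos : 1 ≤ |u i - v i| := Int.one_le_abs (sub_ne_zero.2 hi)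
  have hrest : ∑ j ∈ Finset.univ.erase i, |u j - v j| = 0 := by omega
  have hother : ∀ j ≠ i, u j = v j := fun j hj => by
    have := (Finset.sum_eq_zero_iff_of_nonneg fun k _ => abs_nonneg (u k - v k)).1 hrest j
      (Finset.mem_erase.2 ⟨hj, Finset.mem_univ j⟩)
    rwa [abs_eq_zero, sub_eq_zero] at this
  have hupdate : ∀ b, b = v i → Function.update u i b = v := fun b hb =>
    Function.update_eq_iff.2 ⟨hb, hother⟩
  rw [nbrs, Finset.mem_union, Finset.mem_image, Finset.mem_image]
  rcases abs_eq (zero_le_one' ℤ) |>.1 (by omega : |u i - v i| = 1) with h1 | h1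
  · exact Or.inr ⟨i, Finset.mem_univ i, hupdate _ (by omega)⟩
  · exact Or.inl ⟨i, Finset.mem_univ i, hupdate _ (by omega)⟩

lemma vbdry_subset (Λ : Finset (Fin d → ℤ)) : vbdry Λ ⊆ Λ := Finset.filter_subset _ _

lemma mem_of_dist1_eq_one_of_notMem_vbdry {Λ : Finset (Fin d → ℤ)} {u v : Fin d → ℤ}
    (hu : u ∈ Λ) (hub : u ∉ vbdry Λ) (huv : dist1 u v = 1) : v ∈ Λ := by
  by_contra hv
  exact hub (Finset.mem_filter.2 ⟨hu, fun hsub => hv (hsub (mem_nbrs_of_dist1_eq_one huv))⟩)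

lemma disjoint_vbdry_of_subset {Λ₁ Λ₂ : Finset (Fin d → ℤ)} (hsub : Λ₁ ⊆ Λ₂)
    (hdisj : Disjoint (vbdry Λ₁) (vbdry Λ₂)) : Disjoint Λ₁ (vbdry Λ₂) := by
  refine Finset.disjoint_left.2 fun v hv₁ hv₂ => Finset.disjoint_left.1 hdisj ?_ hv₂
  exact Finset.mem_filter.2 ⟨hv₁, fun hnbrs => (Finset.mem_filter.1 hv₂).2 (hnbrs.trans hsub)⟩

@[simp]
lemma mem_inΛ {Λ A : Finset (Fin d → ℤ)} {v : Λ} : v ∈ inΛ Λ A ↔ (v : Fin d → ℤ) ∈ A := by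
  simp [inΛ]

lemma inΛ_mono {Λ A B : Finset (Fin d → ℤ)} (hAB : A ⊆ B) : inΛ Λ A ⊆ inΛ Λ B :=
  fun _ hv => mem_inΛ.2 (hAB (mem_inΛ.1 hv))

lemma disjoint_inΛ {Λ A B : Finset (Fin d → ℤ)} (hAB : Disjoint A B) :
    Disjoint (inΛ Λ A) (inΛ Λ B) :=
  Finset.disjoint_left.2 fun _ hA hB => Finset.disjoint_left.1 hAB (mem_inΛ.1 hA) (mem_inΛ.1 hB)

lemma restF_shiftF (Λ₁ Λ₂ : Finset (Fin d → ℤ)) (t : ℝ) (η : (Fin d → ℤ) → ℝ) :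
    restF Λ₂ (shiftF Λ₁ t η) = tilt (inΛ Λ₂ Λ₁) t (restF Λ₂ η) := by
  funext v
  by_cases hv : (v : Fin d → ℤ) ∈ Λ₁ <;> simp [restF, shiftF, tilt, hv]

lemma DL_eq (Λ₁ Λ₂ : Finset (Fin d → ℤ)) (J h ε β : ℝ) (η : (Fin d → ℤ) → ℝ) :
    DL d Λ₁ Λ₂ J h ε β η = (1 / 2) *
      (thermalG (latG d Λ₂) J h ε β (restF Λ₂ η) (inΛ Λ₂ (vbdry Λ₂)) (fun _ => pl)
          (magn (inΛ Λ₂ Λ₁)) -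
        thermalG (latG d Λ₂) J h ε β (restF Λ₂ η) (inΛ Λ₂ (vbdry Λ₂)) (fun _ => mn)
          (magn (inΛ Λ₂ Λ₁))) := by
  have hmagn : magn (inΛ Λ₂ Λ₁) = fun σ => ∑ v ∈ inΛ Λ₂ Λ₁, spinR (σ v) := rfl
  rw [hmagn, thermalG_finset_sum, thermalG_finset_sum, ← Finset.sum_sub_distrib, inΛ,
    Finset.sum_filter]
  rfl

end Lattice

theorem surface_tension_integral_identity_general
    (Λ₁ Λ₂ : Finset (Fin 2 → ℤ)) (hsub : Λ₁ ⊆ Λ₂)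
    (hdisj : Disjoint (vbdry Λ₁) (vbdry Λ₂))
    (J h ε β : ℝ) (hε : 0 < ε) (hβ : 0 < β) :
    ∀ η : (Fin 2 → ℤ) → ℝ,
      surfT 2 Λ₁ Λ₂ J h ε β η =
        2 * ε * ∫ t : ℝ, DL 2 Λ₁ Λ₂ J h ε β (shiftF Λ₁ t η) := by
  intro η
  have hsep : ∀ u v, (latG 2 Λ₂).Adj u v → u ∈ inΛ Λ₂ Λ₁ \ inΛ Λ₂ (vbdry Λ₁) →
      v ∈ inΛ Λ₂ Λ₁ := fun u v huv hu => by
    simp only [Finset.mem_sdiff, mem_inΛ] at hu ⊢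
    exact mem_of_dist1_eq_one_of_notMem_vbdry hu.1 hu.2 huv
  simp_rw [DL_eq, restF_shiftF, ← integral_const_mul]
  rw [surfT, Z2L, Z2L, Z2L, Z2L, log_Z2G_crossRatio_eq_integral _ J h ε β _ hβ hε
    (inΛ_mono (vbdry_subset Λ₁)) (disjoint_inΛ (disjoint_vbdry_of_subset hsub hdisj))
    hsep]
  congr 1 with t
  ring

/-- **Integral identity for the surface tension** (Theorem 4.2, first equality): for
nested finite subgraphs `Λ₁ ⊆ Λ₂` of `ℤ²` with disjoint internal vertex boundaries, at
`β ∈ (0,∞)`, and for every field realization `η`,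
`T_{Λ₁,Λ₂}(η) = 2ε ∫_ℝ D_{Λ₁,Λ₂}(η^{(t)}) dt`, where `η^{(t)}` adds a uniform field of
intensity `t` on `Λ₁`. -/
theorem surface_tension_integral_identity
    (Λ₁ Λ₂ : Finset (Fin 2 → ℤ)) (hsub : Λ₁ ⊆ Λ₂)
    (hdisj : Disjoint (vbdry Λ₁) (vbdry Λ₂))
    (J h ε β : ℝ) (hJ : 0 < J) (hε : 0 < ε) (hβ : 0 < β) :
    ∀ η : (Fin 2 → ℤ) → ℝ,
      surfT 2 Λ₁ Λ₂ J h ε β η =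
        2 * ε * ∫ t : ℝ, DL 2 Λ₁ Λ₂ J h ε β (shiftF Λ₁ t η) :=
  surface_tension_integral_identity_general Λ₁ Λ₂ hsub hdisj J h ε β hε hβ

end RFIM
end
end
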